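/- arXiv:1903.08163 — 8 statements merged into one kernel-verified Lean document; each statement's English description precedes it below -/
import Mathlib

section
/- Fix nonnegative vectors ρ, ρ̂ and indices l, k, and let x* = √(MK) ρ_{l,k} ρ̂_{l,k} β_{l,k}^l / ũ_{l,k}(ρ̂,ρ) be the minimizer of e_{l,k} over u_{l,k} ∈ ℝ. Then the minimum value equals e_{l,k}(x*) = 1 − M K ρ_{l,k}² ρ̂_{l,k}² (β_{l,k}^l)² / ũ_{l,k}(ρ̂,ρ) = 1 / (1 + SINR_{l,k}(ρ², ρ̂²)), where ρ² and ρ̂² denote the vectors with entries ρ_{i,t}² and ρ̂_{i,t}². -/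
open Finset

/-- Interference-plus-noise term `D_{l,k}(p, p̂)`.
`β l i t` denotes `β_{i,t}^l` (large-scale fading from user `t` in cell `i` to BS `l`). -/
noncomputable def Dterm (L K M : ℕ) (β : Fin L → Fin L → Fin K → ℝ) (σ2 : ℝ)
    (p phat : Fin L → Fin K → ℝ) (l : Fin L) (k : Fin K) : ℝ :=
  (M : ℝ) * K * ∑ i ∈ Finset.univ.erase l, p i k * phat i k * β l i k ^ 2
    + ((K : ℝ) * ∑ i, phat i k * β l i k + σ2) * ((∑ i, ∑ t, p i t * β l i t) + σ2)

/-- Effective SINR of user `k` in cell `l`. -/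
noncomputable def SINR (L K M : ℕ) (β : Fin L → Fin L → Fin K → ℝ) (σ2 : ℝ)
    (p phat : Fin L → Fin K → ℝ) (l : Fin L) (k : Fin K) : ℝ :=
  (M : ℝ) * K * p l k * phat l k * β l l k ^ 2 / Dterm L K M β σ2 p phat l k

/-- Mean square error `e_{l,k}(u, ρ̂, ρ)` of the auxiliary SISO system. -/
noncomputable def eMSE (L K M : ℕ) (β : Fin L → Fin L → Fin K → ℝ) (σ2 : ℝ)
    (u ρhat ρ : Fin L → Fin K → ℝ) (l : Fin L) (k : Fin K) : ℝ :=
  (M : ℝ) * K * u l k ^ 2 * ∑ i, ρ i k ^ 2 * ρhat i k ^ 2 * β l i k ^ 2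
    - 2 * Real.sqrt ((M : ℝ) * K) * ρ l k * ρhat l k * u l k * β l l k
    + u l k ^ 2 * ((K : ℝ) * ∑ i, ρhat i k ^ 2 * β l i k + σ2)
        * ((∑ i, ∑ t, ρ i t ^ 2 * β l i t) + σ2) + 1

/-- The quantity `ũ_{l,k}(ρ̂, ρ)`. -/
noncomputable def utilde (L K M : ℕ) (β : Fin L → Fin L → Fin K → ℝ) (σ2 : ℝ)
    (ρhat ρ : Fin L → Fin K → ℝ) (l : Fin L) (k : Fin K) : ℝ :=
  (M : ℝ) * K * ∑ i, ρ i k ^ 2 * ρhat i k ^ 2 * β l i k ^ 2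
    + ((K : ℝ) * ∑ i, ρhat i k ^ 2 * β l i k + σ2)
        * ((∑ i, ∑ t, ρ i t ^ 2 * β l i t) + σ2)

/-- The weighted-MMSE objective `F(u, w, ρ̂, ρ) = Σ_{l,k} (w_{l,k} e_{l,k} − ln w_{l,k})`. -/
noncomputable def Fobj (L K M : ℕ) (β : Fin L → Fin L → Fin K → ℝ) (σ2 : ℝ)
    (u w ρhat ρ : Fin L → Fin K → ℝ) : ℝ :=
  ∑ l, ∑ k, (w l k * eMSE L K M β σ2 u ρhat ρ l k - Real.log (w l k))

/-- Update the `(l,k)` entry of a doubly-indexed vector to the value `x`. -/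
noncomputable def updLK {L K : ℕ} (f : Fin L → Fin K → ℝ) (l : Fin L) (k : Fin K)
    (x : ℝ) : Fin L → Fin K → ℝ :=
  Function.update f l (Function.update (f l) k x)

/-- the minimum value of `e_{l,k}` over `u_{l,k}` equals
`1 − MK ρ² ρ̂² β² / ũ = 1/(1 + SINR_{l,k}(ρ², ρ̂²))`. -/
theorem stmt_4 (L K M : ℕ) (hL : 0 < L) (hK : 0 < K) (hM : 0 < M)
    (β : Fin L → Fin L → Fin K → ℝ) (hβ : ∀ l i t, 0 < β l i t)
    (σ2 : ℝ) (hσ : 0 < σ2)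
    (u ρhat ρ : Fin L → Fin K → ℝ)
    (hρ : ∀ l k, 0 ≤ ρ l k) (hρhat : ∀ l k, 0 ≤ ρhat l k)
    (l : Fin L) (k : Fin K) :
    eMSE L K M β σ2
        (updLK u l k (Real.sqrt ((M : ℝ) * K) * ρ l k * ρhat l k * β l l k /
          utilde L K M β σ2 ρhat ρ l k)) ρhat ρ l k =
      1 - (M : ℝ) * K * ρ l k ^ 2 * ρhat l k ^ 2 * β l l k ^ 2 /
          utilde L K M β σ2 ρhat ρ l k ∧
    1 - (M : ℝ) * K * ρ l k ^ 2 * ρhat l k ^ 2 * β l l k ^ 2 /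
          utilde L K M β σ2 ρhat ρ l k =
      1 / (1 + SINR L K M β σ2 (fun i t => ρ i t ^ 2) (fun i t => ρhat i t ^ 2) l k) := by
  -- abbreviations
  set S := ∑ i, ρ i k ^ 2 * ρhat i k ^ 2 * β l i k ^ 2 with hSdef
  set B := (K : ℝ) * ∑ i, ρhat i k ^ 2 * β l i k + σ2 with hBdef
  set C := (∑ i, ∑ t, ρ i t ^ 2 * β l i t) + σ2 with hCdef
  have hS : (0:ℝ) ≤ S := Finset.sum_nonneg fun i _ => by positivity
  have hB : (0:ℝ) < B := by
    have h1 : (0:ℝ) ≤ ∑ i, ρhat i k ^ 2 * β l i k :=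
      Finset.sum_nonneg fun i _ => mul_nonneg (sq_nonneg _) (hβ l i k).le
    have hK0 : (0:ℝ) ≤ (K:ℝ) := Nat.cast_nonneg K
    nlinarith
  have hC : (0:ℝ) < C := by
    have h1 : (0:ℝ) ≤ ∑ i, ∑ t, ρ i t ^ 2 * β l i t :=
      Finset.sum_nonneg fun i _ => Finset.sum_nonneg fun t _ =>
        mul_nonneg (sq_nonneg _) (hβ l i t).le
    linarith
  have hMK : (0:ℝ) ≤ (M:ℝ) * K := by positivity
  have hc2 : Real.sqrt ((M:ℝ) * K) ^ 2 = (M:ℝ) * K := Real.sq_sqrt hMK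
  have hUeq : utilde L K M β σ2 ρhat ρ l k = (M:ℝ) * K * S + B * C := rfl
  have hU : 0 < utilde L K M β σ2 ρhat ρ l k := by
    rw [hUeq]; nlinarith
  set U := utilde L K M β σ2 ρhat ρ l k with hUdef
  have hUne : U ≠ 0 := ne_of_gt hU
  set D := Dterm L K M β σ2 (fun i t => ρ i t ^ 2) (fun i t => ρhat i t ^ 2) l k with hDdef
  have hDeq : D = (M:ℝ) * K * ∑ i ∈ Finset.univ.erase l,
      ρ i k ^ 2 * ρhat i k ^ 2 * β l i k ^ 2 + B * C := rfl
  have hD : 0 < D := by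
    rw [hDeq]
    have h1 : (0:ℝ) ≤ ∑ i ∈ Finset.univ.erase l, ρ i k ^ 2 * ρhat i k ^ 2 * β l i k ^ 2 :=
      Finset.sum_nonneg fun i _ => by positivity
    nlinarith
  have hDne : D ≠ 0 := ne_of_gt hD
  -- relation U = D + MK ρ² ρ̂² β²
  have hUD : U = D + (M:ℝ) * K * (ρ l k ^ 2 * ρhat l k ^ 2 * β l l k ^ 2) := by
    rw [hUeq, hDeq]
    have := Finset.sum_erase_add Finset.univ
      (fun i => ρ i k ^ 2 * ρhat i k ^ 2 * β l i k ^ 2) (Finset.mem_univ l)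
    rw [hSdef, ← this]
    ring
  set c := Real.sqrt ((M : ℝ) * K) with hcdef
  constructor
  · -- first equality
    have hupd : updLK u l k (c * ρ l k * ρhat l k * β l l k / U) l k
        = c * ρ l k * ρhat l k * β l l k / U := by
      simp [updLK]
    rw [eMSE, hupd, ← hSdef, ← hBdef, ← hCdef, ← hcdef]
    have hU' : U = (M:ℝ) * K * S + B * C := hUeq
    field_simp
    linear_combination (-(ρ l k ^ 2 * ρhat l k ^ 2 * β l l k ^ 2 * U)) * hc2 - (c ^ 2 * ρ l k ^ 2 * ρhat l k ^ 2 * β l l k ^ 2) * hU'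
  · -- second equality
    rw [SINR, ← hDdef]
    have h1 : 1 + (M:ℝ) * K * ρ l k ^ 2 * ρhat l k ^ 2 * β l l k ^ 2 / D = U / D := by
      field_simp
      rw [hUD]; ring
    rw [h1, one_div, inv_div]
    field_simp
    linear_combination hUD
end

section
/- For all vectors u : {1,…,L}×{1,…,K} → ℝ and all nonnegative vectors ρ, ρ̂, and every l, k, the mean square error is strictly positive: e_{l,k}(u,ρ̂,ρ) > 0. In fact e_{l,k}(u,ρ̂,ρ) ≥ 1/(1 + SINR_{l,k}(ρ², ρ̂²)) > 0. -/
open Finset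

/-- the mean square error is strictly positive; in fact
`e_{l,k}(u,ρ̂,ρ) ≥ 1/(1 + SINR_{l,k}(ρ², ρ̂²)) > 0`. -/
theorem stmt_5 (L K M : ℕ) (hL : 0 < L) (hK : 0 < K) (hM : 0 < M)
    (β : Fin L → Fin L → Fin K → ℝ) (hβ : ∀ l i t, 0 < β l i t)
    (σ2 : ℝ) (hσ : 0 < σ2)
    (u ρhat ρ : Fin L → Fin K → ℝ)
    (hρ : ∀ l k, 0 ≤ ρ l k) (hρhat : ∀ l k, 0 ≤ ρhat l k)
    (l : Fin L) (k : Fin K) :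
    0 < 1 / (1 + SINR L K M β σ2 (fun i t => ρ i t ^ 2) (fun i t => ρhat i t ^ 2) l k) ∧
    1 / (1 + SINR L K M β σ2 (fun i t => ρ i t ^ 2) (fun i t => ρhat i t ^ 2) l k) ≤
      eMSE L K M β σ2 u ρhat ρ l k ∧
    0 < eMSE L K M β σ2 u ρhat ρ l k := by
  have hMK : (0:ℝ) < (M:ℝ) * K := by positivity
  set s : ℝ := Real.sqrt ((M:ℝ) * K) * ρ l k * ρhat l k * β l l k with hsdef
  have hs2 : s ^ 2 = (M:ℝ) * K * (ρ l k ^ 2 * ρhat l k ^ 2 * β l l k ^ 2) := by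
    rw [hsdef]
    have : Real.sqrt ((M:ℝ) * K) ^ 2 = (M:ℝ) * K := Real.sq_sqrt hMK.le
    nlinarith [this]
  set D : ℝ := Dterm L K M β σ2 (fun i t => ρ i t ^ 2) (fun i t => ρhat i t ^ 2) l k with hDdef
  set T : ℝ := utilde L K M β σ2 ρhat ρ l k with hTdef
  have hB : 0 < ((K:ℝ) * ∑ i, ρhat i k ^ 2 * β l i k + σ2)
      * ((∑ i, ∑ t, ρ i t ^ 2 * β l i t) + σ2) := by
    apply mul_pos
    · apply add_pos_of_nonneg_of_pos _ hσ
      apply mul_nonneg (by positivity)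
      exact Finset.sum_nonneg fun i _ => mul_nonneg (by positivity) (hβ l i k).le
    · apply add_pos_of_nonneg_of_pos _ hσ
      exact Finset.sum_nonneg fun i _ => Finset.sum_nonneg fun t _ =>
        mul_nonneg (by positivity) (hβ l i t).le
  have hD0 : 0 < D := by
    rw [hDdef, Dterm]
    apply add_pos_of_nonneg_of_pos _ hB
    apply mul_nonneg hMK.le
    exact Finset.sum_nonneg fun i _ => by positivity
  have hTD : T = D + s ^ 2 := by
    rw [hTdef, hDdef, utilde, Dterm, hs2]
    have hsplit := Finset.add_sum_erase Finset.univ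
      (fun i => ρ i k ^ 2 * ρhat i k ^ 2 * β l i k ^ 2) (Finset.mem_univ l)
    rw [← hsplit]
    ring
  have hT0 : 0 < T := by rw [hTD]; positivity
  have hSINR : SINR L K M β σ2 (fun i t => ρ i t ^ 2) (fun i t => ρhat i t ^ 2) l k
      = s ^ 2 / D := by
    rw [SINR, ← hDdef, hs2]; ring_nf
  have hinv : 1 / (1 + SINR L K M β σ2 (fun i t => ρ i t ^ 2)
      (fun i t => ρhat i t ^ 2) l k) = D / T := by
    rw [hSINR, hTD]
    rw [div_eq_div_iff (by positivity) (by positivity)]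
    field_simp
  have he : eMSE L K M β σ2 u ρhat ρ l k = T * u l k ^ 2 - 2 * s * u l k + 1 := by
    rw [eMSE, hTdef, utilde, hsdef]; ring
  have hmain : D / T ≤ eMSE L K M β σ2 u ρhat ρ l k := by
    rw [he, div_le_iff₀ hT0]
    nlinarith [sq_nonneg (T * u l k - s), hTD]
  have hpos : 0 < D / T := div_pos hD0 hT0
  refine ⟨by rw [hinv]; exact hpos, by rw [hinv]; exact hmain, lt_of_lt_of_le (hinv ▸ hpos) (hinv ▸ hmain)⟩
end

section
/- Fix nonnegative vectors ρ, ρ̂ with 0 ≤ ρ_{l,k}, ρ̂_{l,k} ≤ √P. Then the infimum of F(u,w,ρ̂,ρ) over all u : {1,…,L}×{1,…,K} → ℝ and all w : {1,…,L}×{1,…,K} → (0,∞) equals L·K − Σ_{l=1}^L Σ_{k=1}^K ln(1 + SINR_{l,k}(ρ², ρ̂²)), and it is attained at u_{l,k} = √(MK) ρ_{l,k} ρ̂_{l,k} β_{l,k}^l / ũ_{l,k}(ρ̂,ρ) and w_{l,k} = 1/e_{l,k}(u,ρ̂,ρ). -/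
open Finset

/-- for fixed feasible `ρ, ρ̂`, the infimum of `F` over `u` and `w > 0` equals
`LK − Σ_{l,k} ln(1 + SINR_{l,k}(ρ², ρ̂²))`, attained at the stated `u*, w*`. -/
theorem stmt_7 (L K M : ℕ) (hL : 0 < L) (hK : 0 < K) (hM : 0 < M)
    (β : Fin L → Fin L → Fin K → ℝ) (hβ : ∀ l i t, 0 < β l i t)
    (σ2 : ℝ) (hσ : 0 < σ2) (P : ℝ) (hP : 0 < P)
    (ρhat ρ : Fin L → Fin K → ℝ)
    (hρ : ∀ l k, ρ l k ∈ Set.Icc 0 (Real.sqrt P))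
    (hρhat : ∀ l k, ρhat l k ∈ Set.Icc 0 (Real.sqrt P))
    (ustar wstar : Fin L → Fin K → ℝ)
    (hustar : ∀ l k, ustar l k =
      Real.sqrt ((M : ℝ) * K) * ρ l k * ρhat l k * β l l k /
        utilde L K M β σ2 ρhat ρ l k)
    (hwstar : ∀ l k, wstar l k = 1 / eMSE L K M β σ2 ustar ρhat ρ l k) :
    Fobj L K M β σ2 ustar wstar ρhat ρ =
      (L : ℝ) * K - ∑ l, ∑ k, Real.log (1 +
        SINR L K M β σ2 (fun i t => ρ i t ^ 2) (fun i t => ρhat i t ^ 2) l k) ∧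
    ∀ (u w : Fin L → Fin K → ℝ), (∀ l k, 0 < w l k) →
      Fobj L K M β σ2 ustar wstar ρhat ρ ≤ Fobj L K M β σ2 u w ρhat ρ := by
  have hMK : (0:ℝ) ≤ (M:ℝ) * K := by positivity
  have hsq : Real.sqrt ((M:ℝ)*K) ^ 2 = (M:ℝ)*K := Real.sq_sqrt hMK
  set b : Fin L → Fin K → ℝ :=
    fun l k => Real.sqrt ((M:ℝ)*K) * ρ l k * ρhat l k * β l l k with hb
  set U : Fin L → Fin K → ℝ := utilde L K M β σ2 ρhat ρ with hUdef
  set D : Fin L → Fin K → ℝ :=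
    Dterm L K M β σ2 (fun i t => ρ i t ^ 2) (fun i t => ρhat i t ^ 2) with hDdef
  have hDpos : ∀ l k, 0 < D l k := by
    intro l k
    have h1 : 0 ≤ (M:ℝ) * K * ∑ i ∈ Finset.univ.erase l,
        ρ i k ^ 2 * ρhat i k ^ 2 * β l i k ^ 2 := by
      apply mul_nonneg hMK
      exact Finset.sum_nonneg fun i _ => by positivity
    have h2 : 0 < (K:ℝ) * (∑ i, ρhat i k ^ 2 * β l i k) + σ2 := by
      have : 0 ≤ (K:ℝ) * ∑ i, ρhat i k ^ 2 * β l i k :=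
        mul_nonneg (by positivity)
          (Finset.sum_nonneg fun i _ => mul_nonneg (sq_nonneg _) (hβ l i k).le)
      linarith
    have h3 : 0 < (∑ i, ∑ t, ρ i t ^ 2 * β l i t) + σ2 := by
      have : 0 ≤ ∑ i, ∑ t, ρ i t ^ 2 * β l i t :=
        Finset.sum_nonneg fun i _ => Finset.sum_nonneg fun t _ =>
          mul_nonneg (sq_nonneg _) (hβ l i t).le
      linarith
    have h4 := mul_pos h2 h3
    rw [hDdef]; unfold Dterm
    simp only []
    linarith
  have hb2 : ∀ l k, b l k ^ 2 = (M:ℝ) * K * (ρ l k ^ 2 * ρhat l k ^ 2 * β l l k ^ 2) := by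
    intro l k
    have h : b l k ^ 2 = Real.sqrt ((M:ℝ)*K) ^ 2 * (ρ l k ^ 2 * ρhat l k ^ 2 * β l l k ^ 2) := by
      simp only [hb]; ring
    rw [h, hsq]
  have hgap : ∀ l k, U l k - b l k ^ 2 = D l k := by
    intro l k
    rw [hb2 l k, hUdef, hDdef]; unfold utilde Dterm
    rw [← Finset.sum_erase_add Finset.univ
      (fun i => ρ i k ^ 2 * ρhat i k ^ 2 * β l i k ^ 2) (Finset.mem_univ l)]
    ring
  have hUpos : ∀ l k, 0 < U l k := by
    intro l k
    have := hDpos l k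
    have := hgap l k
    nlinarith [sq_nonneg (b l k)]
  have he : ∀ (u : Fin L → Fin K → ℝ) l k, eMSE L K M β σ2 u ρhat ρ l k =
      U l k * (u l k) ^ 2 - 2 * b l k * u l k + 1 := by
    intro u l k
    rw [hUdef]; unfold eMSE utilde
    simp only [hb]
    ring
  set E : Fin L → Fin K → ℝ := fun l k => 1 - b l k ^ 2 / U l k with hE
  have hEstar : ∀ l k, eMSE L K M β σ2 ustar ρhat ρ l k = E l k := by
    intro l k
    rw [he ustar l k, hustar l k]
    simp only [hE, hb]
    have h0 := (hUpos l k).ne'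
    field_simp
    ring
  have hED : ∀ l k, E l k = D l k / U l k := by
    intro l k
    rw [← hgap l k]
    simp only [hE]
    have h0 := (hUpos l k).ne'
    field_simp
  have hEpos : ∀ l k, 0 < E l k := by
    intro l k
    rw [hED l k]
    exact div_pos (hDpos l k) (hUpos l k)
  have hSINR : ∀ l k, 1 + SINR L K M β σ2 (fun i t => ρ i t ^ 2)
      (fun i t => ρhat i t ^ 2) l k = (E l k)⁻¹ := by
    intro l k
    unfold SINR
    rw [← hDdef, hED l k]
    have hnum : (M:ℝ) * K * (fun i t => ρ i t ^ 2) l k * (fun i t => ρhat i t ^ 2) l k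
        * β l l k ^ 2 = b l k ^ 2 := by
      rw [hb2 l k]; ring
    rw [hnum]
    have h1 := (hDpos l k).ne'
    have h2 := (hUpos l k).ne'
    have h3 := hgap l k
    field_simp
    nlinarith [hgap l k]
  have hterm : ∀ l k, wstar l k * eMSE L K M β σ2 ustar ρhat ρ l k
      - Real.log (wstar l k) = 1 + Real.log (E l k) := by
    intro l k
    rw [hEstar l k, hwstar l k, hEstar l k, one_div]
    rw [inv_mul_cancel₀ (hEpos l k).ne', Real.log_inv]
    ring
  have hFstar : Fobj L K M β σ2 ustar wstar ρhat ρ =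
      (L:ℝ) * K + ∑ l, ∑ k, Real.log (E l k) := by
    unfold Fobj
    rw [Finset.sum_congr rfl fun l _ => Finset.sum_congr rfl fun k _ => hterm l k]
    simp [Finset.sum_add_distrib, mul_comm]
  constructor
  · rw [hFstar]
    have : ∀ l k, Real.log (1 + SINR L K M β σ2 (fun i t => ρ i t ^ 2)
        (fun i t => ρhat i t ^ 2) l k) = - Real.log (E l k) := by
      intro l k; rw [hSINR l k, Real.log_inv]
    simp only [this, Finset.sum_neg_distrib]
    ring
  · intro u w hw
    rw [hFstar]
    unfold Fobj
    have key : ∀ l k, 1 + Real.log (E l k) ≤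
        w l k * eMSE L K M β σ2 u ρhat ρ l k - Real.log (w l k) := by
      intro l k
      have hEle : E l k ≤ eMSE L K M β σ2 u ρhat ρ l k := by
        rw [he u l k, hED l k, div_le_iff₀ (hUpos l k)]
        nlinarith [sq_nonneg (U l k * u l k - b l k), hgap l k]
      have h2 : Real.log (w l k * E l k) ≤ w l k * E l k - 1 :=
        Real.log_le_sub_one_of_pos (mul_pos (hw l k) (hEpos l k))
      rw [Real.log_mul (hw l k).ne' (hEpos l k).ne'] at h2
      nlinarith [mul_le_mul_of_nonneg_left hEle (hw l k).le]
    calc (L:ℝ) * K + ∑ l, ∑ k, Real.log (E l k)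
        = ∑ l : Fin L, ∑ k : Fin K, (1 + Real.log (E l k)) := by
          simp [Finset.sum_add_distrib, mul_comm]
      _ ≤ _ := Finset.sum_le_sum fun l _ => Finset.sum_le_sum fun k _ => key l k
end

section
/- (Theorem 1, forward direction.) Suppose (u*, w*, ρ̂*, ρ*) is a global minimizer of F(u,w,ρ̂,ρ) over the feasible set {u_{l,k} ∈ ℝ, w_{l,k} > 0, 0 ≤ ρ̂_{l,k} ≤ √P, 0 ≤ ρ_{l,k} ≤ √P for all l,k}. Then the power allocation p̂*_{l,k} = (ρ̂*_{l,k})², p*_{l,k} = (ρ*_{l,k})² is a global maximizer of Σ_{l=1}^L Σ_{k=1}^K log₂(1 + SINR_{l,k}(p,p̂)) over {(p,p̂) : 0 ≤ p_{l,k} ≤ P, 0 ≤ p̂_{l,k} ≤ P for all l,k}. -/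
open Finset

noncomputable def bcoef (L K M : ℕ) (β : Fin L → Fin L → Fin K → ℝ)
    (ρhat ρ : Fin L → Fin K → ℝ) (l : Fin L) (k : Fin K) : ℝ :=
  Real.sqrt ((M : ℝ) * K) * ρ l k * ρhat l k * β l l k

lemma bcoef_sq (L K M : ℕ) (β : Fin L → Fin L → Fin K → ℝ)
    (ρhat ρ : Fin L → Fin K → ℝ) (l : Fin L) (k : Fin K) :
    bcoef L K M β ρhat ρ l k ^ 2
      = (M : ℝ) * K * ρ l k ^ 2 * ρhat l k ^ 2 * β l l k ^ 2 := by
  unfold bcoef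
  have h : Real.sqrt ((M : ℝ) * K) ^ 2 = (M : ℝ) * K := Real.sq_sqrt (by positivity)
  rw [mul_pow, mul_pow, mul_pow, h]

lemma eMSE_eq (L K M : ℕ) (β : Fin L → Fin L → Fin K → ℝ) (σ2 : ℝ)
    (u ρhat ρ : Fin L → Fin K → ℝ) (l : Fin L) (k : Fin K) :
    eMSE L K M β σ2 u ρhat ρ l k
      = utilde L K M β σ2 ρhat ρ l k * u l k ^ 2
        - 2 * bcoef L K M β ρhat ρ l k * u l k + 1 := by
  unfold eMSE utilde bcoef; ring

lemma Dterm_sq (L K M : ℕ) (β : Fin L → Fin L → Fin K → ℝ) (σ2 : ℝ)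
    (ρhat ρ : Fin L → Fin K → ℝ) (l : Fin L) (k : Fin K) :
    Dterm L K M β σ2 (fun i t => ρ i t ^ 2) (fun i t => ρhat i t ^ 2) l k
      = utilde L K M β σ2 ρhat ρ l k - bcoef L K M β ρhat ρ l k ^ 2 := by
  rw [bcoef_sq]
  unfold Dterm utilde
  rw [Finset.sum_erase_eq_sub (Finset.mem_univ l)]
  ring

lemma utilde_pos (L K M : ℕ) (β : Fin L → Fin L → Fin K → ℝ) (σ2 : ℝ)
    (hβ : ∀ l i t, 0 < β l i t) (hσ : 0 < σ2)
    (ρhat ρ : Fin L → Fin K → ℝ) (l : Fin L) (k : Fin K) :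
    0 < utilde L K M β σ2 ρhat ρ l k := by
  have h1 : 0 ≤ ∑ i, ρ i k ^ 2 * ρhat i k ^ 2 * β l i k ^ 2 :=
    Finset.sum_nonneg fun i _ => by positivity
  have h2 : 0 ≤ ∑ i, ρhat i k ^ 2 * β l i k :=
    Finset.sum_nonneg fun i _ => mul_nonneg (sq_nonneg _) (hβ l i k).le
  have h3 : 0 ≤ ∑ i, ∑ t, ρ i t ^ 2 * β l i t :=
    Finset.sum_nonneg fun i _ => Finset.sum_nonneg fun t _ =>
      mul_nonneg (sq_nonneg _) (hβ l i t).le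
  have hMK : (0:ℝ) ≤ (M : ℝ) * K := by positivity
  have hK0 : (0:ℝ) ≤ (K : ℝ) := by positivity
  unfold utilde
  have t1 : (0:ℝ) ≤ (M : ℝ) * K * ∑ i, ρ i k ^ 2 * ρhat i k ^ 2 * β l i k ^ 2 :=
    mul_nonneg hMK h1
  have t2 : (0:ℝ) < ((K : ℝ) * ∑ i, ρhat i k ^ 2 * β l i k + σ2)
      * ((∑ i, ∑ t, ρ i t ^ 2 * β l i t) + σ2) :=
    mul_pos (by nlinarith [mul_nonneg hK0 h2]) (by linarith)
  linarith

lemma Dterm_pos (L K M : ℕ) (β : Fin L → Fin L → Fin K → ℝ) (σ2 : ℝ)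
    (hβ : ∀ l i t, 0 < β l i t) (hσ : 0 < σ2)
    (p phat : Fin L → Fin K → ℝ) (hp : ∀ l k, 0 ≤ p l k) (hphat : ∀ l k, 0 ≤ phat l k)
    (l : Fin L) (k : Fin K) :
    0 < Dterm L K M β σ2 p phat l k := by
  have h1 : 0 ≤ ∑ i ∈ Finset.univ.erase l, p i k * phat i k * β l i k ^ 2 :=
    Finset.sum_nonneg fun i _ => by
      have := hp i k; have := hphat i k; positivity
  have h2 : 0 ≤ ∑ i, phat i k * β l i k :=
    Finset.sum_nonneg fun i _ => mul_nonneg (hphat i k) (hβ l i k).le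
  have h3 : 0 ≤ ∑ i, ∑ t, p i t * β l i t :=
    Finset.sum_nonneg fun i _ => Finset.sum_nonneg fun t _ =>
      mul_nonneg (hp i t) (hβ l i t).le
  have hMK : (0:ℝ) ≤ (M : ℝ) * K := by positivity
  have hK0 : (0:ℝ) ≤ (K : ℝ) := by positivity
  unfold Dterm
  have t1 : (0:ℝ) ≤ (M : ℝ) * K * ∑ i ∈ Finset.univ.erase l, p i k * phat i k * β l i k ^ 2 :=
    mul_nonneg hMK h1
  have t2 : (0:ℝ) < ((K : ℝ) * ∑ i, phat i k * β l i k + σ2)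
      * ((∑ i, ∑ t, p i t * β l i t) + σ2) :=
    mul_pos (by nlinarith [mul_nonneg hK0 h2]) (by linarith)
  linarith

lemma one_add_SINR (L K M : ℕ) (β : Fin L → Fin L → Fin K → ℝ) (σ2 : ℝ)
    (hβ : ∀ l i t, 0 < β l i t) (hσ : 0 < σ2)
    (ρhat ρ : Fin L → Fin K → ℝ) (l : Fin L) (k : Fin K) :
    1 + SINR L K M β σ2 (fun i t => ρ i t ^ 2) (fun i t => ρhat i t ^ 2) l k
      = utilde L K M β σ2 ρhat ρ l k
        / Dterm L K M β σ2 (fun i t => ρ i t ^ 2) (fun i t => ρhat i t ^ 2) l k := by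
  have hD : 0 < Dterm L K M β σ2 (fun i t => ρ i t ^ 2) (fun i t => ρhat i t ^ 2) l k :=
    Dterm_pos L K M β σ2 hβ hσ _ _ (fun _ _ => sq_nonneg _) (fun _ _ => sq_nonneg _) l k
  have hAD := Dterm_sq L K M β σ2 ρhat ρ l k
  have hb := bcoef_sq L K M β ρhat ρ l k
  unfold SINR
  field_simp
  nlinarith [hAD, hb]

lemma logb_term (L K M : ℕ) (β : Fin L → Fin L → Fin K → ℝ) (σ2 : ℝ)
    (hβ : ∀ l i t, 0 < β l i t) (hσ : 0 < σ2)
    (ρhat ρ : Fin L → Fin K → ℝ) (l : Fin L) (k : Fin K) :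
    Real.logb 2 (1 + SINR L K M β σ2 (fun i t => ρ i t ^ 2) (fun i t => ρhat i t ^ 2) l k)
      = (Real.log (utilde L K M β σ2 ρhat ρ l k)
          - Real.log (Dterm L K M β σ2 (fun i t => ρ i t ^ 2) (fun i t => ρhat i t ^ 2) l k))
        / Real.log 2 := by
  have hA := utilde_pos L K M β σ2 hβ hσ ρhat ρ l k
  have hD : 0 < Dterm L K M β σ2 (fun i t => ρ i t ^ 2) (fun i t => ρhat i t ^ 2) l k :=
    Dterm_pos L K M β σ2 hβ hσ _ _ (fun _ _ => sq_nonneg _) (fun _ _ => sq_nonneg _) l k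
  rw [one_add_SINR L K M β σ2 hβ hσ ρhat ρ l k, Real.logb,
    Real.log_div hA.ne' hD.ne']

lemma term_lb (L K M : ℕ) (β : Fin L → Fin L → Fin K → ℝ) (σ2 : ℝ)
    (hβ : ∀ l i t, 0 < β l i t) (hσ : 0 < σ2)
    (u w ρhat ρ : Fin L → Fin K → ℝ) (l : Fin L) (k : Fin K) (hw : 0 < w l k) :
    1 - (Real.log (utilde L K M β σ2 ρhat ρ l k)
        - Real.log (Dterm L K M β σ2 (fun i t => ρ i t ^ 2) (fun i t => ρhat i t ^ 2) l k))
      ≤ w l k * eMSE L K M β σ2 u ρhat ρ l k - Real.log (w l k) := by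
  set A := utilde L K M β σ2 ρhat ρ l k with hAdef
  set D := Dterm L K M β σ2 (fun i t => ρ i t ^ 2) (fun i t => ρhat i t ^ 2) l k with hDdef
  set b := bcoef L K M β ρhat ρ l k with hbdef
  have hA : 0 < A := utilde_pos L K M β σ2 hβ hσ ρhat ρ l k
  have hD : 0 < D :=
    Dterm_pos L K M β σ2 hβ hσ _ _ (fun _ _ => sq_nonneg _) (fun _ _ => sq_nonneg _) l k
  have hAD : D = A - b ^ 2 := Dterm_sq L K M β σ2 ρhat ρ l k
  have heq : eMSE L K M β σ2 u ρhat ρ l k = A * u l k ^ 2 - 2 * b * u l k + 1 :=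
    eMSE_eq L K M β σ2 u ρhat ρ l k
  have he : D / A ≤ eMSE L K M β σ2 u ρhat ρ l k := by
    rw [div_le_iff₀ hA, heq]
    nlinarith [sq_nonneg (A * u l k - b)]
  have hDA : 0 < D / A := div_pos hD hA
  have hepos : 0 < eMSE L K M β σ2 u ρhat ρ l k := lt_of_lt_of_le hDA he
  have h4 : Real.log (w l k * (D / A)) ≤ w l k * eMSE L K M β σ2 u ρhat ρ l k - 1 := by
    calc Real.log (w l k * (D / A))
        ≤ Real.log (w l k * eMSE L K M β σ2 u ρhat ρ l k) :=
          Real.log_le_log (by positivity) (mul_le_mul_of_nonneg_left he hw.le)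
      _ ≤ w l k * eMSE L K M β σ2 u ρhat ρ l k - 1 :=
          Real.log_le_sub_one_of_pos (mul_pos hw hepos)
  rw [Real.log_mul hw.ne' hDA.ne', Real.log_div hD.ne' hA.ne'] at h4
  linarith

lemma term_opt (L K M : ℕ) (β : Fin L → Fin L → Fin K → ℝ) (σ2 : ℝ)
    (hβ : ∀ l i t, 0 < β l i t) (hσ : 0 < σ2)
    (ρhat ρ : Fin L → Fin K → ℝ) (l : Fin L) (k : Fin K) :
    (utilde L K M β σ2 ρhat ρ l k
        / Dterm L K M β σ2 (fun i t => ρ i t ^ 2) (fun i t => ρhat i t ^ 2) l k)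
      * eMSE L K M β σ2
          (fun i t => bcoef L K M β ρhat ρ i t / utilde L K M β σ2 ρhat ρ i t) ρhat ρ l k
      - Real.log (utilde L K M β σ2 ρhat ρ l k
        / Dterm L K M β σ2 (fun i t => ρ i t ^ 2) (fun i t => ρhat i t ^ 2) l k)
    = 1 - (Real.log (utilde L K M β σ2 ρhat ρ l k)
        - Real.log (Dterm L K M β σ2 (fun i t => ρ i t ^ 2) (fun i t => ρhat i t ^ 2) l k)) := by
  set A := utilde L K M β σ2 ρhat ρ l k with hAdef
  set D := Dterm L K M β σ2 (fun i t => ρ i t ^ 2) (fun i t => ρhat i t ^ 2) l k with hDdef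
  set b := bcoef L K M β ρhat ρ l k with hbdef
  have hA : 0 < A := utilde_pos L K M β σ2 hβ hσ ρhat ρ l k
  have hD : 0 < D :=
    Dterm_pos L K M β σ2 hβ hσ _ _ (fun _ _ => sq_nonneg _) (fun _ _ => sq_nonneg _) l k
  have hAD : D = A - b ^ 2 := Dterm_sq L K M β σ2 ρhat ρ l k
  have heq := eMSE_eq L K M β σ2
    (fun i t => bcoef L K M β ρhat ρ i t / utilde L K M β σ2 ρhat ρ i t) ρhat ρ l k
  have he : eMSE L K M β σ2
      (fun i t => bcoef L K M β ρhat ρ i t / utilde L K M β σ2 ρhat ρ i t) ρhat ρ l k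
      = D / A := by
    rw [heq, ← hbdef, ← hAdef]
    field_simp
    linear_combination (-1) * hAD
  rw [he, Real.log_div hA.ne' hD.ne']
  have : A / D * (D / A) = 1 := by field_simp
  rw [this]

/-- Theorem 1, forward direction: a global minimizer of `F` over the
feasible set yields a global maximizer `(ρ*², ρ̂*²)` of the sum spectral efficiency. -/
theorem stmt_8 (L K M : ℕ) (hL : 0 < L) (hK : 0 < K) (hM : 0 < M)
    (β : Fin L → Fin L → Fin K → ℝ) (hβ : ∀ l i t, 0 < β l i t)
    (σ2 : ℝ) (hσ : 0 < σ2) (P : ℝ) (hP : 0 < P)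
    (ustar wstar ρhatstar ρstar : Fin L → Fin K → ℝ)
    (hfeas : ∀ l k, 0 < wstar l k ∧ ρhatstar l k ∈ Set.Icc 0 (Real.sqrt P) ∧
      ρstar l k ∈ Set.Icc 0 (Real.sqrt P))
    (hmin : ∀ (u w ρhat ρ : Fin L → Fin K → ℝ), (∀ l k, 0 < w l k) →
      (∀ l k, ρhat l k ∈ Set.Icc 0 (Real.sqrt P)) →
      (∀ l k, ρ l k ∈ Set.Icc 0 (Real.sqrt P)) →
      Fobj L K M β σ2 ustar wstar ρhatstar ρstar ≤ Fobj L K M β σ2 u w ρhat ρ) :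
    ∀ (p phat : Fin L → Fin K → ℝ),
      (∀ l k, p l k ∈ Set.Icc 0 P) → (∀ l k, phat l k ∈ Set.Icc 0 P) →
      (∑ l, ∑ k, Real.logb 2 (1 + SINR L K M β σ2 p phat l k)) ≤
        ∑ l, ∑ k, Real.logb 2 (1 + SINR L K M β σ2
          (fun i t => ρstar i t ^ 2) (fun i t => ρhatstar i t ^ 2) l k) := by
  intro p phat hp hphat
  set ρ : Fin L → Fin K → ℝ := fun i t => Real.sqrt (p i t) with hρdef
  set ρh : Fin L → Fin K → ℝ := fun i t => Real.sqrt (phat i t) with hρhdef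
  have hρsq : (fun i t => ρ i t ^ 2) = p := by
    funext i t; exact Real.sq_sqrt (hp i t).1
  have hρhsq : (fun i t => ρh i t ^ 2) = phat := by
    funext i t; exact Real.sq_sqrt (hphat i t).1
  have hρfeas : ∀ l k, ρ l k ∈ Set.Icc 0 (Real.sqrt P) := fun l k =>
    ⟨Real.sqrt_nonneg _, Real.sqrt_le_sqrt (hp l k).2⟩
  have hρhfeas : ∀ l k, ρh l k ∈ Set.Icc 0 (Real.sqrt P) := fun l k =>
    ⟨Real.sqrt_nonneg _, Real.sqrt_le_sqrt (hphat l k).2⟩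
  set u : Fin L → Fin K → ℝ :=
    fun i t => bcoef L K M β ρh ρ i t / utilde L K M β σ2 ρh ρ i t with hudef
  set w : Fin L → Fin K → ℝ := fun i t =>
    utilde L K M β σ2 ρh ρ i t
      / Dterm L K M β σ2 (fun i t => ρ i t ^ 2) (fun i t => ρh i t ^ 2) i t with hwdef
  have hwpos : ∀ l k, 0 < w l k := fun l k =>
    div_pos (utilde_pos L K M β σ2 hβ hσ ρh ρ l k)
      (Dterm_pos L K M β σ2 hβ hσ _ _ (fun _ _ => sq_nonneg _) (fun _ _ => sq_nonneg _) l k)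
  have h1 := hmin u w ρh ρ hwpos hρhfeas hρfeas
  have h2 : Fobj L K M β σ2 u w ρh ρ
      = ∑ l, ∑ k, (1 - (Real.log (utilde L K M β σ2 ρh ρ l k)
          - Real.log (Dterm L K M β σ2 (fun i t => ρ i t ^ 2)
              (fun i t => ρh i t ^ 2) l k))) := by
    unfold Fobj
    refine Finset.sum_congr rfl fun l _ => Finset.sum_congr rfl fun k _ => ?_
    exact term_opt L K M β σ2 hβ hσ ρh ρ l k
  have h3 : (∑ l, ∑ k, (1 - (Real.log (utilde L K M β σ2 ρhatstar ρstar l k)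
        - Real.log (Dterm L K M β σ2 (fun i t => ρstar i t ^ 2)
            (fun i t => ρhatstar i t ^ 2) l k))))
      ≤ Fobj L K M β σ2 ustar wstar ρhatstar ρstar := by
    unfold Fobj
    refine Finset.sum_le_sum fun l _ => Finset.sum_le_sum fun k _ => ?_
    exact term_lb L K M β σ2 hβ hσ ustar wstar ρhatstar ρstar l k (hfeas l k).1
  have key : (∑ l, ∑ k, (Real.log (utilde L K M β σ2 ρh ρ l k)
        - Real.log (Dterm L K M β σ2 (fun i t => ρ i t ^ 2)
            (fun i t => ρh i t ^ 2) l k)))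
      ≤ ∑ l, ∑ k, (Real.log (utilde L K M β σ2 ρhatstar ρstar l k)
        - Real.log (Dterm L K M β σ2 (fun i t => ρstar i t ^ 2)
            (fun i t => ρhatstar i t ^ 2) l k)) := by
    have hchain := le_trans h3 (h1.trans_eq h2)
    simp only [Finset.sum_sub_distrib] at hchain ⊢
    linarith
  have e1 : (∑ l, ∑ k, Real.logb 2 (1 + SINR L K M β σ2
        (fun i t => ρ i t ^ 2) (fun i t => ρh i t ^ 2) l k))
      = (∑ l, ∑ k, (Real.log (utilde L K M β σ2 ρh ρ l k)
          - Real.log (Dterm L K M β σ2 (fun i t => ρ i t ^ 2)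
              (fun i t => ρh i t ^ 2) l k))) / Real.log 2 := by
    rw [Finset.sum_div]
    refine Finset.sum_congr rfl fun l _ => ?_
    rw [Finset.sum_div]
    exact Finset.sum_congr rfl fun k _ => logb_term L K M β σ2 hβ hσ ρh ρ l k
  have e2 : (∑ l, ∑ k, Real.logb 2 (1 + SINR L K M β σ2
        (fun i t => ρstar i t ^ 2) (fun i t => ρhatstar i t ^ 2) l k))
      = (∑ l, ∑ k, (Real.log (utilde L K M β σ2 ρhatstar ρstar l k)
          - Real.log (Dterm L K M β σ2 (fun i t => ρstar i t ^ 2)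
              (fun i t => ρhatstar i t ^ 2) l k))) / Real.log 2 := by
    rw [Finset.sum_div]
    refine Finset.sum_congr rfl fun l _ => ?_
    rw [Finset.sum_div]
    exact Finset.sum_congr rfl fun k _ => logb_term L K M β σ2 hβ hσ ρhatstar ρstar l k
  rw [← hρsq, ← hρhsq, e1, e2]
  have hlog2 : 0 < Real.log 2 := Real.log_pos one_lt_two
  gcongr
end

section
/- (Block convexity enabling the alternating algorithm.) The objective F(u,w,ρ̂,ρ) is convex with respect to each of the four variable blocks when the other three are held fixed: (i) u ↦ F is convex on ℝ^{L×K} for fixed w ≥ 0, ρ̂ ≥ 0, ρ ≥ 0; (ii) w ↦ F is convex on (0,∞)^{L×K} for fixed u, ρ̂, ρ (with e_{l,k} ≥ 0); (iii) ρ̂ ↦ F is convex on [0,∞)^{L×K} for fixed u ≥ 0, w ≥ 0, ρ ≥ 0; (iv) ρ ↦ F is convex on [0,∞)^{L×K} for fixed u ≥ 0, w ≥ 0, ρ̂ ≥ 0. -/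
open Finset

section BlockConvexHelpers

variable {L K : ℕ}

private lemma convexOn_fsum {ι E : Type*} [AddCommMonoid E] [Module ℝ E]
    {s : Set E} (hs : Convex ℝ s) (t : Finset ι) (f : ι → E → ℝ)
    (h : ∀ i ∈ t, ConvexOn ℝ s (f i)) :
    ConvexOn ℝ s (fun x => ∑ i ∈ t, f i x) := by
  have hp : ConvexOn ℝ s (∑ i ∈ t, f i) :=
    Finset.sum_induction f (fun g => ConvexOn ℝ s g) (fun a b ha hb => ha.add hb)
      (by exact convexOn_const (0 : ℝ) hs) h
  convert hp using 1
  funext x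
  simp

private lemma convexOn_add' {E : Type*} [AddCommMonoid E] [Module ℝ E]
    {s : Set E} {f g : E → ℝ} (hf : ConvexOn ℝ s f) (hg : ConvexOn ℝ s g) :
    ConvexOn ℝ s (fun x => f x + g x) := hf.add hg

private lemma convexOn_const_mul {E : Type*} [AddCommMonoid E] [Module ℝ E]
    {s : Set E} {f : E → ℝ} {c : ℝ} (hc : 0 ≤ c) (hf : ConvexOn ℝ s f) :
    ConvexOn ℝ s (fun x => c * f x) := by
  simpa [smul_eq_mul] using hf.smul hc

private lemma convexOn_sq_eval {s : Set (Fin L → Fin K → ℝ)} (hs : Convex ℝ s)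
    {c : ℝ} (hc : 0 ≤ c) (i : Fin L) (j : Fin K) :
    ConvexOn ℝ s (fun x => c * x i j ^ 2) := by
  have h1 : ConvexOn ℝ (Set.univ : Set ℝ) (fun t : ℝ => t ^ 2) := Even.convexOn_pow even_two
  have h2 := h1.comp_linearMap
    ((LinearMap.proj j : (Fin K → ℝ) →ₗ[ℝ] ℝ).comp
      (LinearMap.proj i : (Fin L → Fin K → ℝ) →ₗ[ℝ] (Fin K → ℝ)))
  have h3 : ConvexOn ℝ (Set.univ : Set (Fin L → Fin K → ℝ)) (fun x => x i j ^ 2) := by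
    exact h2
  exact convexOn_const_mul hc (h3.subset (Set.subset_univ s) hs)

private lemma convexOn_affine_eval {s : Set (Fin L → Fin K → ℝ)} (hs : Convex ℝ s)
    (c d : ℝ) (i : Fin L) (j : Fin K) :
    ConvexOn ℝ s (fun x => c * x i j + d) := by
  refine ⟨hs, fun x _ y _ a b ha hb hab => le_of_eq ?_⟩
  simp only [Pi.add_apply, Pi.smul_apply, smul_eq_mul]
  linear_combination (-d) * hab

private lemma convex_nonnegSet :
    Convex ℝ {x : Fin L → Fin K → ℝ | ∀ l k, 0 ≤ x l k} := by
  intro x hx y hy a b ha hb hab l k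
  have := add_nonneg (mul_nonneg ha (hx l k)) (mul_nonneg hb (hy l k))
  simpa [smul_eq_mul] using this

private lemma convex_posSet :
    Convex ℝ {x : Fin L → Fin K → ℝ | ∀ l k, 0 < x l k} := by
  intro x hx y hy a b ha hb hab l k
  simp only [Pi.add_apply, Pi.smul_apply, smul_eq_mul]
  rcases eq_or_lt_of_le ha with h | h
  · have hb1 : b = 1 := by linarith
    simpa [← h, hb1] using hy l k
  · exact add_pos_of_pos_of_nonneg (mul_pos h (hx l k)) (mul_nonneg hb (hy l k).le)

private lemma convexOn_neg_log_eval (l : Fin L) (k : Fin K) :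
    ConvexOn ℝ {x : Fin L → Fin K → ℝ | ∀ l k, 0 < x l k}
      (fun x => - Real.log (x l k)) := by
  have h1 : ConvexOn ℝ (Set.Ioi (0 : ℝ)) (-Real.log) :=
    strictConcaveOn_log_Ioi.concaveOn.neg
  have h2 := h1.comp_linearMap
    ((LinearMap.proj k : (Fin K → ℝ) →ₗ[ℝ] ℝ).comp
      (LinearMap.proj l : (Fin L → Fin K → ℝ) →ₗ[ℝ] (Fin K → ℝ)))
  have h3 : ConvexOn ℝ {x : Fin L → Fin K → ℝ | ∀ l k, 0 < x l k}
      ((-Real.log) ∘ fun x : Fin L → Fin K → ℝ => x l k) :=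
    h2.subset (fun x hx => hx l k) convex_posSet
  exact h3

end BlockConvexHelpers

/-- block convexity of `F` in each of the four variable blocks. -/
theorem stmt_11 (L K M : ℕ) (hL : 0 < L) (hK : 0 < K) (hM : 0 < M)
    (β : Fin L → Fin L → Fin K → ℝ) (hβ : ∀ l i t, 0 < β l i t)
    (σ2 : ℝ) (hσ : 0 < σ2) :
    (∀ w ρhat ρ : Fin L → Fin K → ℝ,
      (∀ l k, 0 ≤ w l k) → (∀ l k, 0 ≤ ρhat l k) → (∀ l k, 0 ≤ ρ l k) →
      ConvexOn ℝ Set.univ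
        (fun u : Fin L → Fin K → ℝ => Fobj L K M β σ2 u w ρhat ρ)) ∧
    (∀ u ρhat ρ : Fin L → Fin K → ℝ,
      (∀ l k, 0 ≤ eMSE L K M β σ2 u ρhat ρ l k) →
      ConvexOn ℝ {w : Fin L → Fin K → ℝ | ∀ l k, 0 < w l k}
        (fun w => Fobj L K M β σ2 u w ρhat ρ)) ∧
    (∀ u w ρ : Fin L → Fin K → ℝ,
      (∀ l k, 0 ≤ u l k) → (∀ l k, 0 ≤ w l k) → (∀ l k, 0 ≤ ρ l k) →
      ConvexOn ℝ {ρhat : Fin L → Fin K → ℝ | ∀ l k, 0 ≤ ρhat l k}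
        (fun ρhat => Fobj L K M β σ2 u w ρhat ρ)) ∧
    (∀ u w ρhat : Fin L → Fin K → ℝ,
      (∀ l k, 0 ≤ u l k) → (∀ l k, 0 ≤ w l k) → (∀ l k, 0 ≤ ρhat l k) →
      ConvexOn ℝ {ρ : Fin L → Fin K → ℝ | ∀ l k, 0 ≤ ρ l k}
        (fun ρ => Fobj L K M β σ2 u w ρhat ρ)) := by
  refine ⟨?_, ?_, ?_, ?_⟩
  · -- (i) convexity in u
    intro w ρhat ρ hw hρhat hρ
    unfold Fobj
    refine convexOn_fsum convex_univ _ _ fun l _ => ?_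
    refine convexOn_fsum convex_univ _ _ fun k _ => ?_
    have h2 : (0:ℝ) ≤ ∑ i, ρhat i k ^ 2 * β l i k :=
      Finset.sum_nonneg fun i _ => mul_nonneg (sq_nonneg _) (hβ l i k).le
    have h3 : (0:ℝ) ≤ ∑ i, ∑ t, ρ i t ^ 2 * β l i t :=
      Finset.sum_nonneg fun i _ => Finset.sum_nonneg fun t _ =>
        mul_nonneg (sq_nonneg _) (hβ l i t).le
    have hA : 0 ≤ w l k * ((M:ℝ) * K * ∑ i, ρ i k ^ 2 * ρhat i k ^ 2 * β l i k ^ 2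
        + ((K:ℝ) * ∑ i, ρhat i k ^ 2 * β l i k + σ2)
            * ((∑ i, ∑ t, ρ i t ^ 2 * β l i t) + σ2)) :=
      mul_nonneg (hw l k) (add_nonneg (by positivity)
        (mul_nonneg (add_nonneg (mul_nonneg (Nat.cast_nonneg K) h2) hσ.le)
          (add_nonneg h3 hσ.le)))
    have key : (fun u : Fin L → Fin K → ℝ =>
          w l k * eMSE L K M β σ2 u ρhat ρ l k - Real.log (w l k))
        = fun u => (w l k * ((M:ℝ) * K * ∑ i, ρ i k ^ 2 * ρhat i k ^ 2 * β l i k ^ 2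
              + ((K:ℝ) * ∑ i, ρhat i k ^ 2 * β l i k + σ2)
                  * ((∑ i, ∑ t, ρ i t ^ 2 * β l i t) + σ2))) * u l k ^ 2
            + ((w l k * (-2 * Real.sqrt ((M:ℝ) * K) * ρ l k * ρhat l k * β l l k)) * u l k
                + (w l k - Real.log (w l k))) := by
      funext u
      simp only [eMSE]
      ring
    rw [key]
    exact convexOn_add' (convexOn_sq_eval convex_univ hA l k)
      (convexOn_affine_eval convex_univ _ _ l k)
  · -- (ii) convexity in w
    intro u ρhat ρ _
    unfold Fobj
    refine convexOn_fsum convex_posSet _ _ fun l _ => ?_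
    refine convexOn_fsum convex_posSet _ _ fun k _ => ?_
    have key : (fun w : Fin L → Fin K → ℝ =>
          w l k * eMSE L K M β σ2 u ρhat ρ l k - Real.log (w l k))
        = fun w => (eMSE L K M β σ2 u ρhat ρ l k * w l k + 0) + (- Real.log (w l k)) := by
      funext w
      ring
    rw [key]
    exact convexOn_add' (convexOn_affine_eval convex_posSet _ _ l k)
      (convexOn_neg_log_eval l k)
  · -- (iii) convexity in ρhat
    intro u w ρ hu hw hρ
    unfold Fobj
    refine convexOn_fsum convex_nonnegSet _ _ fun l _ => ?_
    refine convexOn_fsum convex_nonnegSet _ _ fun k _ => ?_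
    have hP : (0:ℝ) ≤ (∑ i, ∑ t, ρ i t ^ 2 * β l i t) + σ2 :=
      add_nonneg (Finset.sum_nonneg fun i _ => Finset.sum_nonneg fun t _ =>
        mul_nonneg (sq_nonneg _) (hβ l i t).le) hσ.le
    have hA1 : ConvexOn ℝ {x : Fin L → Fin K → ℝ | ∀ l k, 0 ≤ x l k}
        (fun x : Fin L → Fin K → ℝ => ∑ i, ρ i k ^ 2 * x i k ^ 2 * β l i k ^ 2) := by
      refine convexOn_fsum convex_nonnegSet _ _ fun i _ => ?_
      have h : (fun x : Fin L → Fin K → ℝ => ρ i k ^ 2 * x i k ^ 2 * β l i k ^ 2)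
          = fun x => (ρ i k ^ 2 * β l i k ^ 2) * x i k ^ 2 := by funext x; ring
      rw [h]
      exact convexOn_sq_eval convex_nonnegSet (by positivity) i k
    have hA2 : ConvexOn ℝ {x : Fin L → Fin K → ℝ | ∀ l k, 0 ≤ x l k}
        (fun x : Fin L → Fin K → ℝ => ∑ i, x i k ^ 2 * β l i k) := by
      refine convexOn_fsum convex_nonnegSet _ _ fun i _ => ?_
      have h : (fun x : Fin L → Fin K → ℝ => x i k ^ 2 * β l i k)
          = fun x => β l i k * x i k ^ 2 := by funext x; ring
      rw [h]
      exact convexOn_sq_eval convex_nonnegSet (hβ l i k).le i k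
    have key : (fun ρhat : Fin L → Fin K → ℝ =>
          w l k * eMSE L K M β σ2 u ρhat ρ l k - Real.log (w l k))
        = fun ρhat =>
            (w l k * ((M:ℝ) * K * u l k ^ 2))
                * (∑ i, ρ i k ^ 2 * ρhat i k ^ 2 * β l i k ^ 2)
            + ((w l k * (u l k ^ 2 * K * ((∑ i, ∑ t, ρ i t ^ 2 * β l i t) + σ2)))
                  * (∑ i, ρhat i k ^ 2 * β l i k)
                + ((w l k * (-2 * Real.sqrt ((M:ℝ) * K) * ρ l k * u l k * β l l k)) * ρhat l k
                    + (w l k * (u l k ^ 2 * σ2 * ((∑ i, ∑ t, ρ i t ^ 2 * β l i t) + σ2) + 1)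
                        - Real.log (w l k)))) := by
      funext ρhat
      simp only [eMSE]
      ring
    rw [key]
    refine convexOn_add' (convexOn_const_mul (mul_nonneg (hw l k) (by positivity)) hA1) ?_
    refine convexOn_add' (convexOn_const_mul
      (mul_nonneg (hw l k) (mul_nonneg (by positivity) hP)) hA2) ?_
    exact convexOn_affine_eval convex_nonnegSet _ _ l k
  · -- (iv) convexity in ρ
    intro u w ρhat hu hw hρhat
    unfold Fobj
    refine convexOn_fsum convex_nonnegSet _ _ fun l _ => ?_
    refine convexOn_fsum convex_nonnegSet _ _ fun k _ => ?_
    have h2 : (0:ℝ) ≤ (K:ℝ) * (∑ i, ρhat i k ^ 2 * β l i k) + σ2 :=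
      add_nonneg (mul_nonneg (Nat.cast_nonneg K)
        (Finset.sum_nonneg fun i _ => mul_nonneg (sq_nonneg _) (hβ l i k).le)) hσ.le
    have hA1 : ConvexOn ℝ {x : Fin L → Fin K → ℝ | ∀ l k, 0 ≤ x l k}
        (fun x : Fin L → Fin K → ℝ => ∑ i, x i k ^ 2 * ρhat i k ^ 2 * β l i k ^ 2) := by
      refine convexOn_fsum convex_nonnegSet _ _ fun i _ => ?_
      have h : (fun x : Fin L → Fin K → ℝ => x i k ^ 2 * ρhat i k ^ 2 * β l i k ^ 2)
          = fun x => (ρhat i k ^ 2 * β l i k ^ 2) * x i k ^ 2 := by funext x; ring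
      rw [h]
      exact convexOn_sq_eval convex_nonnegSet (by positivity) i k
    have hAD : ConvexOn ℝ {x : Fin L → Fin K → ℝ | ∀ l k, 0 ≤ x l k}
        (fun x : Fin L → Fin K → ℝ => ∑ i, ∑ t, x i t ^ 2 * β l i t) := by
      refine convexOn_fsum convex_nonnegSet _ _ fun i _ => ?_
      refine convexOn_fsum convex_nonnegSet _ _ fun t _ => ?_
      have h : (fun x : Fin L → Fin K → ℝ => x i t ^ 2 * β l i t)
          = fun x => β l i t * x i t ^ 2 := by funext x; ring
      rw [h]
      exact convexOn_sq_eval convex_nonnegSet (hβ l i t).le i t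
    have key : (fun ρ : Fin L → Fin K → ℝ =>
          w l k * eMSE L K M β σ2 u ρhat ρ l k - Real.log (w l k))
        = fun ρ =>
            (w l k * ((M:ℝ) * K * u l k ^ 2))
                * (∑ i, ρ i k ^ 2 * ρhat i k ^ 2 * β l i k ^ 2)
            + ((w l k * (u l k ^ 2 * ((K:ℝ) * (∑ i, ρhat i k ^ 2 * β l i k) + σ2)))
                  * (∑ i, ∑ t, ρ i t ^ 2 * β l i t)
                + ((w l k * (-2 * Real.sqrt ((M:ℝ) * K) * ρhat l k * u l k * β l l k)) * ρ l k
                    + (w l k * (u l k ^ 2 * ((K:ℝ) * (∑ i, ρhat i k ^ 2 * β l i k) + σ2) * σ2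
                          + 1) - Real.log (w l k)))) := by
      funext ρ
      simp only [eMSE]
      ring
    rw [key]
    have hA1' : ConvexOn ℝ {x : Fin L → Fin K → ℝ | ∀ l k, 0 ≤ x l k}
        (fun x : Fin L → Fin K → ℝ => ∑ i, x i k ^ 2 * ρhat i k ^ 2 * β l i k ^ 2) := hA1
    refine convexOn_add' ?_ ?_
    · have h : (fun x : Fin L → Fin K → ℝ =>
            (w l k * ((M:ℝ) * K * u l k ^ 2)) * (∑ i, x i k ^ 2 * ρhat i k ^ 2 * β l i k ^ 2))
          = fun x => (w l k * ((M:ℝ) * K * u l k ^ 2))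
              * (∑ i, x i k ^ 2 * ρhat i k ^ 2 * β l i k ^ 2) := rfl
      exact convexOn_const_mul (mul_nonneg (hw l k) (by positivity)) hA1
    · refine convexOn_add' (convexOn_const_mul
        (mul_nonneg (hw l k) (mul_nonneg (sq_nonneg _) h2)) hAD) ?_
      exact convexOn_affine_eval convex_nonnegSet _ _ l k
end

section
/- (Pilot-power update, equation (15).) Fix u, w with u_{l,k} > 0, w_{l,k} > 0 for all l,k, fix ρ ≥ 0 with ρ_{l,k} > 0, and fix all coordinates of ρ̂ ≥ 0 except ρ̂_{l,k}. Then the function x ↦ F evaluated with ρ̂_{l,k} = x is a strictly convex quadratic in x, and its unique minimizer over the interval [0, √P] is x* = min( √(MK) ρ_{l,k} u_{l,k} w_{l,k} β_{l,k}^l / B , √P ), where B = ρ_{l,k}² M K Σ_{i=1}^L w_{i,k} u_{i,k}² (β_{l,k}^i)² + K Σ_{j=1}^L w_{j,k} u_{j,k}² β_{l,k}^j (Σ_{i=1}^L Σ_{t=1}^K ρ_{i,t}² β_{i,t}^j + σ²). -/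
open Finset

/-- pilot-power update, equation (15): as a function of `ρ̂_{l,k} = x`,
`F` is a strictly convex quadratic whose unique minimizer over `[0, √P]` is
`min(√(MK) ρ_{l,k} u_{l,k} w_{l,k} β_{l,k}^l / B, √P)`. -/
theorem stmt_12 (L K M : ℕ) (hL : 0 < L) (hK : 0 < K) (hM : 0 < M)
    (β : Fin L → Fin L → Fin K → ℝ) (hβ : ∀ l i t, 0 < β l i t)
    (σ2 : ℝ) (hσ : 0 < σ2) (P : ℝ) (hP : 0 < P)
    (u w ρhat ρ : Fin L → Fin K → ℝ)
    (hu : ∀ l k, 0 < u l k) (hw : ∀ l k, 0 < w l k)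
    (hρ : ∀ l k, 0 ≤ ρ l k) (hρhat : ∀ l k, 0 ≤ ρhat l k)
    (l : Fin L) (k : Fin K) (hρlk : 0 < ρ l k)
    (B : ℝ)
    (hB : B = ρ l k ^ 2 * ((M : ℝ) * K) * ∑ i, w i k * u i k ^ 2 * β i l k ^ 2
      + (K : ℝ) * ∑ j, w j k * u j k ^ 2 * β j l k *
          ((∑ i, ∑ t, ρ i t ^ 2 * β j i t) + σ2))
    (xstar : ℝ)
    (hxstar : xstar = min
      (Real.sqrt ((M : ℝ) * K) * ρ l k * u l k * w l k * β l l k / B)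
      (Real.sqrt P)) :
    StrictConvexOn ℝ Set.univ
      (fun x : ℝ => Fobj L K M β σ2 u w (updLK ρhat l k x) ρ) ∧
    (∃ c : ℝ, ∀ x : ℝ, Fobj L K M β σ2 u w (updLK ρhat l k x) ρ =
      B * x ^ 2 - 2 * Real.sqrt ((M : ℝ) * K) * ρ l k * u l k * w l k * β l l k * x + c) ∧
    xstar ∈ Set.Icc (0 : ℝ) (Real.sqrt P) ∧
    ∀ x ∈ Set.Icc (0 : ℝ) (Real.sqrt P), x ≠ xstar →
      Fobj L K M β σ2 u w (updLK ρhat l k xstar) ρ <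
        Fobj L K M β σ2 u w (updLK ρhat l k x) ρ := by
    -- basic positivity facts
  have hMK : (0:ℝ) < (M:ℝ) * K :=
    mul_pos (Nat.cast_pos.mpr hM) (Nat.cast_pos.mpr hK)
  have hK0 : (0:ℝ) < (K:ℝ) := Nat.cast_pos.mpr hK
  have hsq : 0 < Real.sqrt ((M:ℝ) * K) := Real.sqrt_pos.mpr hMK
  have hAA : 0 < Real.sqrt ((M:ℝ) * K) * ρ l k * u l k * w l k * β l l k := by
    have h1 := hu l k; have h2 := hw l k; have h3 := hβ l l k; positivity
  have hT3 : ∀ j : Fin L, 0 ≤ (∑ i, ∑ t, ρ i t ^ 2 * β j i t) :=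
    fun j => Finset.sum_nonneg fun i _ => Finset.sum_nonneg fun t _ => by
      have := (hβ j i t).le; positivity
  have hBpos : 0 < B := by
    rw [hB]
    have h1 : 0 < ∑ i, w i k * u i k ^ 2 * β i l k ^ 2 :=
      Finset.sum_pos (fun i _ => by
        have := hw i k; have := hu i k; have := hβ i l k; positivity)
        ⟨l, Finset.mem_univ l⟩
    have h2 : 0 < ∑ j, w j k * u j k ^ 2 * β j l k *
        ((∑ i, ∑ t, ρ i t ^ 2 * β j i t) + σ2) :=
      Finset.sum_pos (fun j _ => by
        have := hw j k; have := hu j k; have := hβ j l k; have := hT3 j; positivity)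
        ⟨l, Finset.mem_univ l⟩
    have := mul_pos (mul_pos (pow_pos hρlk 2) hMK) h1
    have := mul_pos hK0 h2
    linarith
  -- description of the updated vector
  have hupd_k : ∀ (x : ℝ) (i : Fin L),
      updLK ρhat l k x i k = if i = l then x else ρhat i k := by
    intro x i
    rcases eq_or_ne i l with h | h
    · subst h; simp [updLK]
    · simp [updLK, Function.update_of_ne h, h]
  have hupd_ne : ∀ (x : ℝ) (i : Fin L) (t : Fin K), t ≠ k →
      updLK ρhat l k x i t = ρhat i t := by
    intro x i t ht
    rcases eq_or_ne i l with h | h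
    · subst h; simp [updLK, Function.update_of_ne ht]
    · simp [updLK, Function.update_of_ne h]
  -- the MSE in column t ≠ k does not depend on x
  have hE_ne : ∀ (x : ℝ) (j : Fin L) (t : Fin K), t ≠ k →
      eMSE L K M β σ2 u (updLK ρhat l k x) ρ j t = eMSE L K M β σ2 u ρhat ρ j t := by
    intro x j t ht
    have h := fun i => hupd_ne x i t ht
    simp only [eMSE, h]
  -- column-k sums
  have hsum1 : ∀ (x : ℝ) (j : Fin L),
      (∑ i, ρ i k ^ 2 * (updLK ρhat l k x i k) ^ 2 * β j i k ^ 2)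
        = ρ l k ^ 2 * β j l k ^ 2 * x ^ 2
          + ∑ i ∈ Finset.univ.erase l, ρ i k ^ 2 * ρhat i k ^ 2 * β j i k ^ 2 := by
    intro x j
    rw [← Finset.add_sum_erase _ _ (Finset.mem_univ l)]
    congr 1
    · rw [hupd_k x l, if_pos rfl]; ring
    · exact Finset.sum_congr rfl fun i hi => by
        rw [hupd_k x i, if_neg (Finset.ne_of_mem_erase hi)]
  have hsum2 : ∀ (x : ℝ) (j : Fin L),
      (∑ i, (updLK ρhat l k x i k) ^ 2 * β j i k)
        = β j l k * x ^ 2 + ∑ i ∈ Finset.univ.erase l, ρhat i k ^ 2 * β j i k := by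
    intro x j
    rw [← Finset.add_sum_erase _ _ (Finset.mem_univ l)]
    congr 1
    · rw [hupd_k x l, if_pos rfl]; ring
    · exact Finset.sum_congr rfl fun i hi => by
        rw [hupd_k x i, if_neg (Finset.ne_of_mem_erase hi)]
  -- the MSE in column k as a quadratic in x
  have hcol : ∀ (x : ℝ) (j : Fin L),
      eMSE L K M β σ2 u (updLK ρhat l k x) ρ j k
        = ((M:ℝ) * K * u j k ^ 2 * (ρ l k ^ 2 * β j l k ^ 2)
            + u j k ^ 2 * ((K:ℝ) * β j l k) * ((∑ i, ∑ t, ρ i t ^ 2 * β j i t) + σ2)) * x ^ 2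
          - 2 * Real.sqrt ((M:ℝ) * K) * ρ j k * u j k * β j j k
              * (if j = l then x else ρhat j k)
          + ((M:ℝ) * K * u j k ^ 2
              * (∑ i ∈ Finset.univ.erase l, ρ i k ^ 2 * ρhat i k ^ 2 * β j i k ^ 2)
            + u j k ^ 2 * ((K:ℝ) * (∑ i ∈ Finset.univ.erase l, ρhat i k ^ 2 * β j i k) + σ2)
                * ((∑ i, ∑ t, ρ i t ^ 2 * β j i t) + σ2) + 1) := by
    intro x j
    simp only [eMSE]
    rw [hsum1 x j, hsum2 x j, hupd_k x j]
    ring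
  -- the per-cell weighted difference
  have step2 : ∀ (x : ℝ) (j : Fin L),
      w j k * eMSE L K M β σ2 u (updLK ρhat l k x) ρ j k
        - w j k * eMSE L K M β σ2 u (updLK ρhat l k 0) ρ j k
      = (w j k * ((M:ℝ) * K * u j k ^ 2 * (ρ l k ^ 2 * β j l k ^ 2)
            + u j k ^ 2 * ((K:ℝ) * β j l k) * ((∑ i, ∑ t, ρ i t ^ 2 * β j i t) + σ2))) * x ^ 2
        - (if j = l then 2 * Real.sqrt ((M:ℝ) * K) * ρ l k * u l k * w l k * β l l k * x
           else 0) := by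
    intro x j
    rw [hcol x j, hcol 0 j]
    rcases eq_or_ne j l with h | h
    · subst h; simp only [if_pos rfl]; simp; ring
    · simp only [if_neg h]; ring
  -- total coefficient equals B
  have hBsum : (∑ j, w j k * ((M:ℝ) * K * u j k ^ 2 * (ρ l k ^ 2 * β j l k ^ 2)
        + u j k ^ 2 * ((K:ℝ) * β j l k) * ((∑ i, ∑ t, ρ i t ^ 2 * β j i t) + σ2))) = B := by
    rw [hB, Finset.mul_sum, Finset.mul_sum, ← Finset.sum_add_distrib]
    exact Finset.sum_congr rfl fun j _ => by ring
  -- the key quadratic identity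
  have key : ∀ x : ℝ, Fobj L K M β σ2 u w (updLK ρhat l k x) ρ
      = B * x ^ 2 - 2 * Real.sqrt ((M:ℝ) * K) * ρ l k * u l k * w l k * β l l k * x
        + Fobj L K M β σ2 u w (updLK ρhat l k 0) ρ := by
    intro x
    have hdiff : Fobj L K M β σ2 u w (updLK ρhat l k x) ρ
        - Fobj L K M β σ2 u w (updLK ρhat l k 0) ρ
        = B * x ^ 2
          - 2 * Real.sqrt ((M:ℝ) * K) * ρ l k * u l k * w l k * β l l k * x := by
      simp only [Fobj]
      rw [← Finset.sum_sub_distrib]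
      have step1 : ∀ j : Fin L,
          ((∑ t, (w j t * eMSE L K M β σ2 u (updLK ρhat l k x) ρ j t - Real.log (w j t)))
            - ∑ t, (w j t * eMSE L K M β σ2 u (updLK ρhat l k 0) ρ j t - Real.log (w j t)))
          = w j k * eMSE L K M β σ2 u (updLK ρhat l k x) ρ j k
            - w j k * eMSE L K M β σ2 u (updLK ρhat l k 0) ρ j k := by
        intro j
        rw [← Finset.sum_sub_distrib]
        rw [Finset.sum_eq_single_of_mem k (Finset.mem_univ k)]
        · ring
        · intro t _ ht
          rw [hE_ne x j t ht, hE_ne 0 j t ht]; ring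
      calc (∑ j, ((∑ t, (w j t * eMSE L K M β σ2 u (updLK ρhat l k x) ρ j t - Real.log (w j t)))
            - ∑ t, (w j t * eMSE L K M β σ2 u (updLK ρhat l k 0) ρ j t - Real.log (w j t))))
          = ∑ j, ((w j k * ((M:ℝ) * K * u j k ^ 2 * (ρ l k ^ 2 * β j l k ^ 2)
                + u j k ^ 2 * ((K:ℝ) * β j l k) * ((∑ i, ∑ t, ρ i t ^ 2 * β j i t) + σ2))) * x ^ 2
              - (if j = l then
                  2 * Real.sqrt ((M:ℝ) * K) * ρ l k * u l k * w l k * β l l k * x else 0)) :=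
            Finset.sum_congr rfl fun j _ => by rw [step1 j, step2 x j]
        _ = (∑ j, (w j k * ((M:ℝ) * K * u j k ^ 2 * (ρ l k ^ 2 * β j l k ^ 2)
                + u j k ^ 2 * ((K:ℝ) * β j l k) * ((∑ i, ∑ t, ρ i t ^ 2 * β j i t) + σ2)))) * x ^ 2
              - ∑ j, (if j = l then
                  2 * Real.sqrt ((M:ℝ) * K) * ρ l k * u l k * w l k * β l l k * x else 0) := by
            rw [Finset.sum_sub_distrib, Finset.sum_mul]
        _ = B * x ^ 2
              - 2 * Real.sqrt ((M:ℝ) * K) * ρ l k * u l k * w l k * β l l k * x := by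
            rw [hBsum, Finset.sum_ite_eq' Finset.univ l
              (fun _ => 2 * Real.sqrt ((M:ℝ) * K) * ρ l k * u l k * w l k * β l l k * x)]
            simp
    linarith [hdiff]
  obtain ⟨c, key2⟩ : ∃ c : ℝ, ∀ x : ℝ, Fobj L K M β σ2 u w (updLK ρhat l k x) ρ =
      B * x ^ 2 - 2 * Real.sqrt ((M:ℝ) * K) * ρ l k * u l k * w l k * β l l k * x + c :=
    ⟨_, key⟩
  clear key
  refine ⟨?_, ⟨c, key2⟩, ?_, ?_⟩
  · -- strict convexity
    refine ⟨convex_univ, fun x _ y _ hxy a b ha hb hab => ?_⟩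
    simp only [smul_eq_mul]
    rw [key2, key2, key2]
    have hb' : b = 1 - a := by linarith
    subst hb'
    have hsq2 : 0 < (x - y) ^ 2 := pow_two_pos_of_ne_zero (sub_ne_zero.mpr hxy)
    nlinarith [mul_pos hBpos (mul_pos (mul_pos ha hb) hsq2)]
  · -- membership
    rw [hxstar]
    exact ⟨le_min (div_nonneg hAA.le hBpos.le) (Real.sqrt_nonneg P), min_le_right _ _⟩
  · -- unique minimizer
    intro x hx hne
    subst hxstar
    rw [key2, key2]
    rcases le_total (Real.sqrt ((M:ℝ) * K) * ρ l k * u l k * w l k * β l l k / B)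
        (Real.sqrt P) with hle | hle
    · rw [min_eq_left hle] at hne ⊢
      set q := Real.sqrt ((M:ℝ) * K) * ρ l k * u l k * w l k * β l l k / B with hqdef
      have hAAq : Real.sqrt ((M:ℝ) * K) * ρ l k * u l k * w l k * β l l k = B * q := by
        rw [hqdef]; field_simp
      have hsq2 : 0 < (x - q) ^ 2 := pow_two_pos_of_ne_zero (sub_ne_zero.mpr hne)
      have e1 : Real.sqrt ((M:ℝ) * K) * ρ l k * u l k * w l k * β l l k * x = B * q * x := by
        rw [hAAq]
      have e2 : Real.sqrt ((M:ℝ) * K) * ρ l k * u l k * w l k * β l l k * q = B * q * q := by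
        rw [hAAq]
      nlinarith [mul_pos hBpos hsq2, e1, e2]
    · rw [min_eq_right hle] at hne ⊢
      have hxlt : x < Real.sqrt P := lt_of_le_of_ne hx.2 hne
      have hBsP : B * Real.sqrt P ≤
          Real.sqrt ((M:ℝ) * K) * ρ l k * u l k * w l k * β l l k := by
        have := mul_le_mul_of_nonneg_left hle hBpos.le
        rwa [mul_div_cancel₀ _ hBpos.ne'] at this
      have hsq2 : 0 < (x - Real.sqrt P) ^ 2 :=
        pow_two_pos_of_ne_zero (sub_ne_zero.mpr hne)
      nlinarith [mul_pos hBpos hsq2,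
        mul_nonneg (sub_nonneg.mpr hBsP) (sub_pos.mpr hxlt).le]
end

section
/- (Data-power update, equation (16).) Fix u, w with u_{l,k} > 0, w_{l,k} > 0 for all l,k, fix ρ̂ ≥ 0 with ρ̂_{l,k} > 0, and fix all coordinates of ρ ≥ 0 except ρ_{l,k}. Then the function x ↦ F evaluated with ρ_{l,k} = x is a strictly convex quadratic in x, and its unique minimizer over the interval [0, √P] is x* = min( √(MK) ρ̂_{l,k} u_{l,k} w_{l,k} β_{l,k}^l / C , √P ), where C = ρ̂_{l,k}² M K Σ_{i=1}^L w_{i,k} u_{i,k}² (β_{l,k}^i)² + Σ_{i=1}^L Σ_{t=1}^K w_{i,t} u_{i,t}² β_{l,k}^i (K Σ_{j=1}^L ρ̂_{j,t}² β_{j,t}^i + σ²). -/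
open Finset

lemma updLK_apply {L K : ℕ} (f : Fin L → Fin K → ℝ) (l : Fin L) (k : Fin K) (x : ℝ)
    (i : Fin L) (t : Fin K) :
    updLK f l k x i t = if i = l ∧ t = k then x else f i t := by
  rcases eq_or_ne i l with hi | hi
  · subst hi
    rcases eq_or_ne t k with ht | ht
    · subst ht; simp [updLK]
    · simp [updLK, Function.update_apply, ht]
  · simp [updLK, Function.update_apply, hi]

lemma quad_ident (L K M : ℕ) (β : Fin L → Fin L → Fin K → ℝ) (σ2 : ℝ)
    (u w ρhat ρ : Fin L → Fin K → ℝ) (l : Fin L) (k : Fin K) (y : ℝ) :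
    Fobj L K M β σ2 u w ρhat (updLK ρ l k y)
      = (ρhat l k ^ 2 * ((M : ℝ) * K) * ∑ i, w i k * u i k ^ 2 * β i l k ^ 2
          + ∑ i, ∑ t, w i t * u i t ^ 2 * β i l k *
              ((K : ℝ) * (∑ j, ρhat j t ^ 2 * β i j t) + σ2)) * (y ^ 2 - ρ l k ^ 2)
        - 2 * Real.sqrt ((M : ℝ) * K) * ρhat l k * u l k * w l k * β l l k * (y - ρ l k)
        + Fobj L K M β σ2 u w ρhat ρ := by
  have hdiff : ∀ (j : Fin L) (t : Fin K), (updLK ρ l k y j t) ^ 2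
      = ρ j t ^ 2 + (if j = l ∧ t = k then y ^ 2 - ρ l k ^ 2 else 0) := by
    intro j t
    rw [updLK_apply]
    split_ifs with h
    · obtain ⟨h1, h2⟩ := h; subst h1; subst h2; ring
    · ring
  have key1 : ∀ (i : Fin L) (t : Fin K),
      (∑ j, (updLK ρ l k y) j t ^ 2 * ρhat j t ^ 2 * β i j t ^ 2)
        = (∑ j, ρ j t ^ 2 * ρhat j t ^ 2 * β i j t ^ 2)
          + (if t = k then (y ^ 2 - ρ l k ^ 2) * ρhat l k ^ 2 * β i l k ^ 2 else 0) := by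
    intro i t
    simp only [hdiff, add_mul, Finset.sum_add_distrib, ite_mul, zero_mul]
    congr 1
    rcases eq_or_ne t k with ht | ht
    · subst ht
      simp [Finset.sum_ite_eq']
    · simp [ht]
  have key2 : ∀ (i : Fin L),
      (∑ j, ∑ s, (updLK ρ l k y) j s ^ 2 * β i j s)
        = (∑ j, ∑ s, ρ j s ^ 2 * β i j s) + (y ^ 2 - ρ l k ^ 2) * β i l k := by
    intro i
    simp only [hdiff, add_mul, Finset.sum_add_distrib, ite_mul, zero_mul]
    congr 1
    simp [ite_and, Finset.sum_ite_eq', Finset.sum_ite_eq]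
  have hE : ∀ (i : Fin L) (t : Fin K),
      eMSE L K M β σ2 u ρhat (updLK ρ l k y) i t
        = eMSE L K M β σ2 u ρhat ρ i t
          + (M : ℝ) * K * u i t ^ 2 *
              (if t = k then (y ^ 2 - ρ l k ^ 2) * ρhat l k ^ 2 * β i l k ^ 2 else 0)
          - 2 * Real.sqrt ((M : ℝ) * K) *
              (if i = l ∧ t = k then y - ρ l k else 0) * ρhat i t * u i t * β i i t
          + u i t ^ 2 * ((K : ℝ) * ∑ j, ρhat j t ^ 2 * β i j t + σ2) *
              ((y ^ 2 - ρ l k ^ 2) * β i l k) := by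
    intro i t
    unfold eMSE
    rw [key1, key2, updLK_apply]
    by_cases hit : i = l ∧ t = k
    · obtain ⟨hi, ht⟩ := hit
      subst hi; subst ht
      simp only [and_self, if_true, ite_true, eq_self_iff_true]
      ring
    · by_cases ht : t = k
      · have hi : i ≠ l := fun h => hit ⟨h, ht⟩
        subst ht
        simp only [eq_self_iff_true, and_true, ite_true, if_neg hi]
        ring
      · simp only [if_neg hit, if_neg ht]
        ring
  have main : (∑ i, ∑ t, (w i t * eMSE L K M β σ2 u ρhat (updLK ρ l k y) i t - Real.log (w i t)))
      = (∑ i, ∑ t, (w i t * eMSE L K M β σ2 u ρhat ρ i t - Real.log (w i t)))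
        + (∑ i, ∑ t, (if t = k then
            ((y ^ 2 - ρ l k ^ 2) * (ρhat l k ^ 2 * ((M : ℝ) * K))) *
              (w i k * u i k ^ 2 * β i l k ^ 2) else 0))
        + (∑ i, ∑ t, (if i = l ∧ t = k then
            -(2 * Real.sqrt ((M : ℝ) * K) * ρhat l k * u l k * w l k * β l l k * (y - ρ l k)) else 0))
        + (∑ i, ∑ t, (y ^ 2 - ρ l k ^ 2) *
            (w i t * u i t ^ 2 * β i l k * ((K : ℝ) * (∑ j, ρhat j t ^ 2 * β i j t) + σ2))) := by
    rw [← Finset.sum_add_distrib, ← Finset.sum_add_distrib, ← Finset.sum_add_distrib]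
    refine Finset.sum_congr rfl fun i _ => ?_
    rw [← Finset.sum_add_distrib, ← Finset.sum_add_distrib, ← Finset.sum_add_distrib]
    refine Finset.sum_congr rfl fun t _ => ?_
    rw [hE i t]
    by_cases hit : i = l ∧ t = k
    · obtain ⟨hi, ht⟩ := hit
      subst hi; subst ht
      simp only [and_self, ite_true, eq_self_iff_true]
      ring
    · by_cases ht : t = k
      · have hi : i ≠ l := fun h => hit ⟨h, ht⟩
        subst ht
        simp only [eq_self_iff_true, and_true, ite_true, if_neg hi]
        ring
      · simp only [if_neg hit, if_neg ht]
        ring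
  have e2 : (∑ i, ∑ t, (if t = k then
        ((y ^ 2 - ρ l k ^ 2) * (ρhat l k ^ 2 * ((M : ℝ) * K))) *
          (w i k * u i k ^ 2 * β i l k ^ 2) else 0))
      = ((y ^ 2 - ρ l k ^ 2) * (ρhat l k ^ 2 * ((M : ℝ) * K))) *
          ∑ i, w i k * u i k ^ 2 * β i l k ^ 2 := by
    rw [Finset.mul_sum]
    refine Finset.sum_congr rfl fun i _ => ?_
    simp [Finset.sum_ite_eq']
  have e3 : (∑ i, ∑ t, (if i = l ∧ t = k then
        -(2 * Real.sqrt ((M : ℝ) * K) * ρhat l k * u l k * w l k * β l l k * (y - ρ l k)) else 0))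
      = -(2 * Real.sqrt ((M : ℝ) * K) * ρhat l k * u l k * w l k * β l l k * (y - ρ l k)) := by
    simp [ite_and, Finset.sum_ite_eq', Finset.sum_ite_eq]
  have e4 : (∑ i, ∑ t, (y ^ 2 - ρ l k ^ 2) *
        (w i t * u i t ^ 2 * β i l k * ((K : ℝ) * (∑ j, ρhat j t ^ 2 * β i j t) + σ2)))
      = (y ^ 2 - ρ l k ^ 2) * ∑ i, ∑ t,
          w i t * u i t ^ 2 * β i l k * ((K : ℝ) * (∑ j, ρhat j t ^ 2 * β i j t) + σ2) := by
    rw [Finset.mul_sum]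
    refine Finset.sum_congr rfl fun i _ => ?_
    rw [Finset.mul_sum]
  unfold Fobj
  rw [main, e2, e3, e4]
  ring


/-- data-power update, equation (16): as a function of `ρ_{l,k} = x`,
`F` is a strictly convex quadratic whose unique minimizer over `[0, √P]` is
`min(√(MK) ρ̂_{l,k} u_{l,k} w_{l,k} β_{l,k}^l / C, √P)`. -/
theorem stmt_13 (L K M : ℕ) (hL : 0 < L) (hK : 0 < K) (hM : 0 < M)
    (β : Fin L → Fin L → Fin K → ℝ) (hβ : ∀ l i t, 0 < β l i t)
    (σ2 : ℝ) (hσ : 0 < σ2) (P : ℝ) (hP : 0 < P)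
    (u w ρhat ρ : Fin L → Fin K → ℝ)
    (hu : ∀ l k, 0 < u l k) (hw : ∀ l k, 0 < w l k)
    (hρ : ∀ l k, 0 ≤ ρ l k) (hρhat : ∀ l k, 0 ≤ ρhat l k)
    (l : Fin L) (k : Fin K) (hρhatlk : 0 < ρhat l k)
    (C : ℝ)
    (hC : C = ρhat l k ^ 2 * ((M : ℝ) * K) * ∑ i, w i k * u i k ^ 2 * β i l k ^ 2
      + ∑ i, ∑ t, w i t * u i t ^ 2 * β i l k *
          ((K : ℝ) * (∑ j, ρhat j t ^ 2 * β i j t) + σ2))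
    (xstar : ℝ)
    (hxstar : xstar = min
      (Real.sqrt ((M : ℝ) * K) * ρhat l k * u l k * w l k * β l l k / C)
      (Real.sqrt P)) :
    StrictConvexOn ℝ Set.univ
      (fun x : ℝ => Fobj L K M β σ2 u w ρhat (updLK ρ l k x)) ∧
    (∃ c : ℝ, ∀ x : ℝ, Fobj L K M β σ2 u w ρhat (updLK ρ l k x) =
      C * x ^ 2 - 2 * Real.sqrt ((M : ℝ) * K) * ρhat l k * u l k * w l k * β l l k * x + c) ∧
    xstar ∈ Set.Icc (0 : ℝ) (Real.sqrt P) ∧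
    ∀ x ∈ Set.Icc (0 : ℝ) (Real.sqrt P), x ≠ xstar →
      Fobj L K M β σ2 u w ρhat (updLK ρ l k xstar) <
        Fobj L K M β σ2 u w ρhat (updLK ρ l k x) := by
  haveI : NeZero L := NeZero.of_pos hL
  haveI : NeZero K := NeZero.of_pos hK
  set B : ℝ := Real.sqrt ((M : ℝ) * K) * ρhat l k * u l k * w l k * β l l k with hBdef
  set c0 : ℝ := Fobj L K M β σ2 u w ρhat ρ - C * ρ l k ^ 2 + 2 * B * ρ l k with hc0
  have hq : ∀ y : ℝ, Fobj L K M β σ2 u w ρhat (updLK ρ l k y)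
      = C * y ^ 2 - 2 * B * y + c0 := by
    intro y
    rw [quad_ident L K M β σ2 u w ρhat ρ l k y, hc0, hC, hBdef]
    ring
  -- positivity facts
  have hMK : (0 : ℝ) < (M : ℝ) * K := by positivity
  have hsMK : (0 : ℝ) < Real.sqrt ((M : ℝ) * K) := Real.sqrt_pos.mpr hMK
  have hB : 0 < B := by
    rw [hBdef]
    exact mul_pos (mul_pos (mul_pos (mul_pos hsMK hρhatlk) (hu l k)) (hw l k)) (hβ l l k)
  have hC0 : 0 < C := by
    rw [hC]
    have h2 : 0 < ∑ i, ∑ t, w i t * u i t ^ 2 * β i l k *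
        ((K : ℝ) * (∑ j, ρhat j t ^ 2 * β i j t) + σ2) := by
      refine Finset.sum_pos (fun i _ => Finset.sum_pos (fun t _ => ?_) univ_nonempty)
        univ_nonempty
      have hA : 0 < (K : ℝ) * (∑ j, ρhat j t ^ 2 * β i j t) + σ2 := by
        have : (0:ℝ) ≤ (K : ℝ) * (∑ j, ρhat j t ^ 2 * β i j t) := by
          refine mul_nonneg (by positivity) (Finset.sum_nonneg fun j _ => ?_)
          exact mul_nonneg (sq_nonneg _) (hβ i j t).le
        linarith
      exact mul_pos (mul_pos (mul_pos (hw i t) (pow_pos (hu i t) 2)) (hβ i l k)) hA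
    have h1 : 0 ≤ ρhat l k ^ 2 * ((M : ℝ) * K) * ∑ i, w i k * u i k ^ 2 * β i l k ^ 2 := by
      refine mul_nonneg (by positivity) (Finset.sum_nonneg fun i _ => ?_)
      exact mul_nonneg (mul_nonneg (hw i k).le (sq_nonneg _)) (sq_nonneg _)
    linarith
  have hBC : B / C * C = B := div_mul_cancel₀ B (ne_of_gt hC0)
  refine ⟨?_, ⟨c0, fun x => by rw [hq x, hBdef]; ring⟩, ?_, ?_⟩
  · refine ⟨convex_univ, fun x _ y _ hxy a b ha hb hab => ?_⟩
    simp only [smul_eq_mul]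
    rw [hq, hq, hq]
    have hxy2 : 0 < (x - y) ^ 2 := by
      have := sub_ne_zero.mpr hxy
      positivity
    have hb' : b = 1 - a := by linarith
    subst hb'
    nlinarith [mul_pos (mul_pos (mul_pos ha hb) hC0) hxy2]
  · rw [hxstar, Set.mem_Icc]
    constructor
    · exact le_min (div_nonneg hB.le hC0.le) (Real.sqrt_nonneg P)
    · exact min_le_right _ _
  · intro x hx hne
    rw [hq, hq]
    rcases le_or_gt (B / C) (Real.sqrt P) with h | h
    · have hxs : xstar = B / C := by rw [hxstar, min_eq_left h]
      have hxne : x ≠ B / C := fun hcontra => hne (hcontra.trans hxs.symm)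
      have hxq2 : 0 < (x - B / C) ^ 2 := by
        have := sub_ne_zero.mpr hxne
        positivity
      have hqC : B = C * (B / C) := by field_simp
      have e1 : B * x = C * (B / C) * x := by rw [← hqC]
      have e2 : B * (B / C) = C * (B / C) * (B / C) := by rw [← hqC]
      rw [hxs]
      nlinarith [mul_pos hC0 hxq2, e1, e2]
    · have hxs : xstar = Real.sqrt P := by rw [hxstar, min_eq_right h.le]
      have hxlt : x < Real.sqrt P := lt_of_le_of_ne hx.2 (by rw [hxs] at hne; exact hne)
      have hBs : C * Real.sqrt P < B := by
        have := mul_lt_mul_of_pos_right h hC0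
        rw [hBC] at this
        linarith
      have h2 : 0 < 2 * B - C * (x + Real.sqrt P) := by
        have := mul_lt_mul_of_pos_left hxlt hC0
        linarith
      rw [hxs]
      nlinarith [mul_pos (sub_pos.mpr hxlt) h2]
end

section
/- (Boundedness below of the WMMSE objective.) On the feasible set {u_{l,k} ∈ ℝ, w_{l,k} > 0, 0 ≤ ρ̂_{l,k} ≤ √P, 0 ≤ ρ_{l,k} ≤ √P for all l,k}, the objective F(u,w,ρ̂,ρ) is bounded below; specifically F(u,w,ρ̂,ρ) ≥ L·K − Σ_{l=1}^L Σ_{k=1}^K ln(1 + M K P² (β_{l,k}^l)² / σ⁴). -/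
/-!
Each summand is bounded separately. For fixed powers, `e_{l,k}` is a quadratic
`a u² - 2 b u + 1` in the receiver coefficient `u`, with `a = ũ_{l,k}` and
`b = √(MK) ρ_{l,k} ρ̂_{l,k} β_{l,k}^l`; the diagonal terms of `ũ_{l,k}` give `a ≥ b² + σ⁴`, and the power constraints give `b² ≤ X σ⁴` with
`X = MKP²(β_{l,k}^l)²/σ⁴`. Hence `e_{l,k} ≥ 1/(1 + X)`. Finally `w e - ln w ≥ 1 + ln e`
(from `ln x ≤ x - 1` at `x = w e`), so each summand is at least `1 - ln (1 + X)`.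
-/

open Finset

lemma one_add_log_le_mul_sub_log {w e : ℝ} (hw : 0 < w) (he : 0 < e) :
    1 + Real.log e ≤ w * e - Real.log w := by
  have h := Real.log_le_sub_one_of_pos (mul_pos hw he)
  rw [Real.log_mul hw.ne' he.ne'] at h
  linarith

lemma one_sub_log_le_mul_sub_log {w e c : ℝ} (hw : 0 < w) (hc : 0 < c) (hec : 1 ≤ e * c) :
    1 - Real.log c ≤ w * e - Real.log w := by
  have he : 0 < e := pos_of_mul_pos_left (one_pos.trans_le hec) hc.le
  have hlog : 0 ≤ Real.log e + Real.log c := by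
    rw [← Real.log_mul he.ne' hc.ne']
    exact Real.log_nonneg hec
  linarith [one_add_log_le_mul_sub_log hw he]

/-- The minimum of `a u² - 2 b u + 1` over `u` is `1 - b²/a ≥ s/(b² + s) ≥ 1/(1 + X)`. -/
lemma one_le_quadratic_mul_one_add {a b s X : ℝ} (u : ℝ) (hs : 0 < s) (hX : 0 ≤ X)
    (hb : b ^ 2 ≤ X * s) (ha : b ^ 2 + s ≤ a) :
    1 ≤ (a * u ^ 2 - 2 * b * u + 1) * (1 + X) := by
  have ha_pos : 0 < a := by nlinarith [sq_nonneg b]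
  have hid : a * ((a * u ^ 2 - 2 * b * u + 1) * (1 + X) - 1) =
      (1 + X) * (a * u - b) ^ 2 + (X * (a - b ^ 2) - b ^ 2) := by ring
  have hrhs : 0 ≤ (1 + X) * (a * u - b) ^ 2 + (X * (a - b ^ 2) - b ^ 2) := by
    have : X * s ≤ X * (a - b ^ 2) := mul_le_mul_of_nonneg_left (by linarith) hX
    nlinarith [sq_nonneg (a * u - b)]
  rw [← hid] at hrhs
  nlinarith [(mul_nonneg_iff_of_pos_left ha_pos).mp hrhs]

section Cell

variable {L K M : ℕ} {β : Fin L → Fin L → Fin K → ℝ} {σ2 : ℝ}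
  {u ρhat ρ : Fin L → Fin K → ℝ}

lemma eMSE_eq_quadratic (l : Fin L) (k : Fin K) :
    eMSE L K M β σ2 u ρhat ρ l k =
      utilde L K M β σ2 ρhat ρ l k * u l k ^ 2
        - 2 * (Real.sqrt ((M : ℝ) * K) * ρ l k * ρhat l k * β l l k) * u l k + 1 := by
  simp only [eMSE, utilde]
  ring

lemma sq_add_sq_le_utilde (hβ : ∀ l i t, 0 ≤ β l i t) (hσ : 0 ≤ σ2)
    (l : Fin L) (k : Fin K) :
    (Real.sqrt ((M : ℝ) * K) * ρ l k * ρhat l k * β l l k) ^ 2 + σ2 ^ 2 ≤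
      utilde L K M β σ2 ρhat ρ l k := by
  have hsqrt : Real.sqrt ((M : ℝ) * K) ^ 2 = (M : ℝ) * K := Real.sq_sqrt (by positivity)
  have hdiag : ρ l k ^ 2 * ρhat l k ^ 2 * β l l k ^ 2 ≤
      ∑ i, ρ i k ^ 2 * ρhat i k ^ 2 * β l i k ^ 2 :=
    single_le_sum (f := fun i => ρ i k ^ 2 * ρhat i k ^ 2 * β l i k ^ 2)
      (fun i _ => by positivity) (mem_univ l)
  have hrx : σ2 ≤ (K : ℝ) * ∑ i, ρhat i k ^ 2 * β l i k + σ2 := by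
    have : 0 ≤ ∑ i, ρhat i k ^ 2 * β l i k :=
      sum_nonneg fun i _ => mul_nonneg (sq_nonneg _) (hβ l i k)
    exact le_add_of_nonneg_left (mul_nonneg K.cast_nonneg this)
  have htx : σ2 ≤ (∑ i, ∑ t, ρ i t ^ 2 * β l i t) + σ2 := by
    have : 0 ≤ ∑ i, ∑ t, ρ i t ^ 2 * β l i t :=
      sum_nonneg fun i _ => sum_nonneg fun t _ => mul_nonneg (sq_nonneg _) (hβ l i t)
    linarith
  have hMK : 0 ≤ (M : ℝ) * K := by positivity
  rw [utilde, mul_pow, mul_pow, mul_pow, hsqrt]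
  nlinarith [mul_le_mul hrx htx hσ (hσ.trans hrx), mul_le_mul_of_nonneg_left hdiag hMK]

lemma sq_le_of_mem_Icc_sqrt {x P : ℝ} (hP : 0 ≤ P) (hx : x ∈ Set.Icc 0 (Real.sqrt P)) :
    x ^ 2 ≤ P := by
  rw [← Real.sq_sqrt hP]
  exact pow_le_pow_left₀ hx.1 hx.2 2

lemma one_le_eMSE_mul (hβ : ∀ l i t, 0 ≤ β l i t) (hσ : 0 < σ2) {P : ℝ} (hP : 0 ≤ P)
    (hρhat : ∀ l k, ρhat l k ∈ Set.Icc 0 (Real.sqrt P))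
    (hρ : ∀ l k, ρ l k ∈ Set.Icc 0 (Real.sqrt P)) (l : Fin L) (k : Fin K) :
    1 ≤ eMSE L K M β σ2 u ρhat ρ l k *
      (1 + (M : ℝ) * K * P ^ 2 * β l l k ^ 2 / σ2 ^ 2) := by
  have hb : (Real.sqrt ((M : ℝ) * K) * ρ l k * ρhat l k * β l l k) ^ 2 ≤
      (M : ℝ) * K * P ^ 2 * β l l k ^ 2 / σ2 ^ 2 * σ2 ^ 2 := by
    rw [div_mul_cancel₀ _ (by positivity), mul_pow, mul_pow, mul_pow,
      Real.sq_sqrt (by positivity), sq P]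
    have hρρ : ρ l k ^ 2 * ρhat l k ^ 2 ≤ P * P :=
      mul_le_mul (sq_le_of_mem_Icc_sqrt hP (hρ l k))
        (sq_le_of_mem_Icc_sqrt hP (hρhat l k)) (sq_nonneg _) hP
    have := mul_le_mul_of_nonneg_left hρρ (by positivity : (0 : ℝ) ≤ M * K * β l l k ^ 2)
    linarith
  rw [eMSE_eq_quadratic]
  exact one_le_quadratic_mul_one_add _ (by positivity) (by positivity) hb
    (sq_add_sq_le_utilde hβ hσ.le l k)

end Cell

theorem stmt_14_general (L K M : ℕ)
    (β : Fin L → Fin L → Fin K → ℝ) (hβ : ∀ l i t, 0 < β l i t)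
    (σ2 : ℝ) (hσ : 0 < σ2) (P : ℝ) (hP : 0 < P)
    (u w ρhat ρ : Fin L → Fin K → ℝ)
    (hw : ∀ l k, 0 < w l k)
    (hρhat : ∀ l k, ρhat l k ∈ Set.Icc 0 (Real.sqrt P))
    (hρ : ∀ l k, ρ l k ∈ Set.Icc 0 (Real.sqrt P)) :
    (L : ℝ) * K - (∑ l, ∑ k, Real.log (1 +
        (M : ℝ) * K * P ^ 2 * β l l k ^ 2 / σ2 ^ 2)) ≤
      Fobj L K M β σ2 u w ρhat ρ := by
  calc (L : ℝ) * K - ∑ l, ∑ k, Real.log (1 + (M : ℝ) * K * P ^ 2 * β l l k ^ 2 / σ2 ^ 2)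
      = ∑ l, ∑ k, (1 - Real.log (1 + (M : ℝ) * K * P ^ 2 * β l l k ^ 2 / σ2 ^ 2)) := by
        simp [sum_sub_distrib]
    _ ≤ Fobj L K M β σ2 u w ρhat ρ := by
        refine sum_le_sum fun l _ => sum_le_sum fun k _ => ?_
        exact one_sub_log_le_mul_sub_log (hw l k) (by positivity)
          (one_le_eMSE_mul (fun l i t => (hβ l i t).le) hσ hP.le hρhat hρ l k)

/-- on the feasible set, the WMMSE objective is bounded below by
`LK − Σ_{l,k} ln(1 + MK P² (β_{l,k}^l)² / σ⁴)`. -/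
theorem stmt_14 (L K M : ℕ) (hL : 0 < L) (hK : 0 < K) (hM : 0 < M)
    (β : Fin L → Fin L → Fin K → ℝ) (hβ : ∀ l i t, 0 < β l i t)
    (σ2 : ℝ) (hσ : 0 < σ2) (P : ℝ) (hP : 0 < P)
    (u w ρhat ρ : Fin L → Fin K → ℝ)
    (hw : ∀ l k, 0 < w l k)
    (hρhat : ∀ l k, ρhat l k ∈ Set.Icc 0 (Real.sqrt P))
    (hρ : ∀ l k, ρ l k ∈ Set.Icc 0 (Real.sqrt P)) :
    (L : ℝ) * K - (∑ l, ∑ k, Real.log (1 +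
        (M : ℝ) * K * P ^ 2 * β l l k ^ 2 / σ2 ^ 2)) ≤
      Fobj L K M β σ2 u w ρhat ρ :=
  stmt_14_general L K M β hβ σ2 hσ P hP u w ρhat ρ hw hρhat hρ
end
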